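/- arXiv:1207.1986 — 10 statements merged into one kernel-verified Lean document; each statement's English description precedes it below -/
import Mathlib

section
/- Let K be a field and let H12 be an n1×m2 matrix, H21 an n2×m1 matrix, H22 an n2×m2 matrix over K. Let U20 be a matrix whose columns form a basis of the kernel of H21ᵀ (the left null space of H21), and let V10 be a matrix whose columns form a basis of the kernel of H12. Then the rank of the (n2+n1)×(m1+m2) block matrix [[H21, H22],[0, H12]] equals rank(U20ᵀ · H22 · V10) + rank(H21) + rank(H12). -/
/-!
Write `F = [[A, B], [0, D]]`. Projecting `ker F` to its second block gives the vectors `y ∈ ker D`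
with `B y ∈ range A`, with fibres isomorphic to `ker A`; by rank–nullity,
`rank F = rank A + rank D + dim (image of ker D under B in coker A)`.
For `A = H21`, `B = H22`, `D = H12`: the columns of `V10` span `ker H12`, and `U20ᵀ` has kernel
exactly `range H21` (its rows span the left null space of `H21`), so it maps `coker H21`
injectively and `rank (U20ᵀ H22 V10)` is that last dimension.
-/

open Matrix Module Submodule LinearMap

namespace Submodule

variable {K V W : Type*} [Field K] [AddCommGroup V] [Module K V] [AddCommGroup W] [Module K W]

theorem finrank_map_eq_finrank_map_mkQ_ker (u : V →ₗ[K] W) (S : Submodule K V) :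
    finrank K (S.map u) = finrank K (S.map (ker u).mkQ) := by
  have hinj : Function.Injective ((ker u).liftQ u le_rfl) :=
    LinearMap.ker_eq_bot.mp (ker_liftQ_eq_bot _ _ _ le_rfl)
  calc finrank K (S.map u)
      = finrank K ((S.map (ker u).mkQ).map ((ker u).liftQ u le_rfl)) := by
        rw [← map_comp, liftQ_mkQ]
    _ = finrank K (S.map (ker u).mkQ) :=
        ((S.map (ker u).mkQ).equivMapOfInjective _ hinj).finrank_eq.symm

theorem finrank_map_add_finrank_inf_ker (f : V →ₗ[K] W) (S : Submodule K V)
    [FiniteDimensional K S] :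
    finrank K (S.map f) + finrank K ↥(S ⊓ ker f) = finrank K S := by
  rw [← range_domRestrict, ← map_comap_subtype, finrank_map_subtype_eq, ← ker_domRestrict]
  exact finrank_range_add_finrank_ker _

end Submodule

namespace Matrix

variable {K : Type*} [Field K]

theorem ker_mulVecLin_transpose_eq_range {n m d : Type*} [Fintype n] [Fintype m] [Fintype d]
    {H : Matrix n m K} {U : Matrix n d K}
    (hU : span K (Set.range fun j => Uᵀ j) = ker Hᵀ.mulVecLin) :
    ker Uᵀ.mulVecLin = range H.mulVecLin := by
  symm
  refine Submodule.eq_of_le_of_finrank_eq ?_ ?_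
  · rintro _ ⟨x, rfl⟩
    ext j
    have hj : Hᵀ *ᵥ Uᵀ j = 0 := hU.le (subset_span ⟨j, rfl⟩)
    change Uᵀ j ⬝ᵥ H *ᵥ x = 0
    rw [dotProduct_mulVec, ← mulVec_transpose, hj, zero_dotProduct]
  · have hrank : Uᵀ.rank = finrank K (ker Hᵀ.mulVecLin) := by
      rw [rank_transpose, rank_eq_finrank_span_cols, ← hU]; rfl
    have h₁ := finrank_range_add_finrank_ker Uᵀ.mulVecLin
    have h₂ := finrank_range_add_finrank_ker Hᵀ.mulVecLin
    change H.rank = _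
    rw [← rank_transpose]
    change Uᵀ.rank + _ = _ at h₁
    change Hᵀ.rank + _ = _ at h₂
    omega

section Blocks

variable {l m n o : Type*} [Fintype m] [Fintype n]
  (A : Matrix l m K) (B : Matrix l n K) (D : Matrix o n K)

theorem fromBlocks_zero₂₁_mulVec_eq_zero_iff (z : m ⊕ n → K) :
    fromBlocks A B 0 D *ᵥ z = 0 ↔
      A *ᵥ (z ∘ Sum.inl) + B *ᵥ (z ∘ Sum.inr) = 0 ∧ D *ᵥ (z ∘ Sum.inr) = 0 := by
  simp only [fromBlocks_mulVec, zero_mulVec, zero_add, funext_iff, Sum.forall, Sum.elim_inl,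
    Sum.elim_inr, Pi.zero_apply]

theorem finrank_ker_fromBlocks_zero₂₁ :
    finrank K (ker (fromBlocks A B 0 D).mulVecLin) = finrank K (ker A.mulVecLin) +
      finrank K ↥(ker D.mulVecLin ⊓ ker ((range A.mulVecLin).mkQ ∘ₗ B.mulVecLin)) := by
  set N := ker (fromBlocks A B 0 D).mulVecLin
  set P : (m ⊕ n → K) →ₗ[K] n → K := funLeft K K Sum.inr
  set Q : (m ⊕ n → K) →ₗ[K] m → K := funLeft K K Sum.inl
  have hN (z : m ⊕ n → K) : z ∈ N ↔
      A *ᵥ (z ∘ Sum.inl) + B *ᵥ (z ∘ Sum.inr) = 0 ∧ D *ᵥ (z ∘ Sum.inr) = 0 :=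
    fromBlocks_zero₂₁_mulVec_eq_zero_iff A B D z
  have hP : N.map P = ker D.mulVecLin ⊓ ker ((range A.mulVecLin).mkQ ∘ₗ B.mulVecLin) := by
    ext y
    simp only [mem_map, mem_inf, mem_ker, ker_comp, ker_mkQ, mem_comap, mem_range,
      mulVecLin_apply]
    constructor
    · rintro ⟨z, hz, rfl⟩
      obtain ⟨hAB, hD⟩ := (hN z).mp hz
      exact ⟨hD, -(z ∘ Sum.inl), by rw [mulVec_neg, neg_eq_iff_add_eq_zero]; exact hAB⟩
    · rintro ⟨hD, x, hx⟩
      refine ⟨Sum.elim (-x) y, (hN _).mpr ⟨?_, hD⟩, rfl⟩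
      rw [Sum.elim_comp_inl, Sum.elim_comp_inr, mulVec_neg, hx, neg_add_cancel]
  have hQ : (N ⊓ ker P).map Q = ker A.mulVecLin := by
    ext x
    simp only [mem_map, mem_inf, mem_ker, mulVecLin_apply]
    constructor
    · rintro ⟨z, ⟨hz, hPz⟩, rfl⟩
      obtain ⟨hAB, -⟩ := (hN z).mp hz
      rwa [show z ∘ Sum.inr = 0 from hPz, mulVec_zero, add_zero] at hAB
    · intro hx
      refine ⟨Sum.elim x 0, ⟨(hN _).mpr ⟨?_, ?_⟩, rfl⟩, rfl⟩ <;>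
        simp only [Sum.elim_comp_inl, Sum.elim_comp_inr, hx, mulVec_zero, add_zero]
  have hPQ : N ⊓ ker P ⊓ ker Q = ⊥ := by
    refine (Submodule.eq_bot_iff _).mpr fun z ⟨⟨_, hPz⟩, hQz⟩ => ?_
    rw [← Sum.elim_comp_inl_inr z, show z ∘ Sum.inr = 0 from hPz,
      show z ∘ Sum.inl = 0 from hQz, Sum.elim_zero_zero]
  have h₁ := finrank_map_add_finrank_inf_ker P N
  have h₂ := finrank_map_add_finrank_inf_ker Q (N ⊓ ker P)
  rw [hP] at h₁
  rw [hQ, hPQ, finrank_bot] at h₂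
  omega

theorem rank_fromBlocks_zero₂₁ :
    (fromBlocks A B 0 D).rank = A.rank + D.rank +
      finrank K ((ker D.mulVecLin).map ((range A.mulVecLin).mkQ ∘ₗ B.mulVecLin)) := by
  have hF := finrank_range_add_finrank_ker (fromBlocks A B 0 D).mulVecLin
  have hA := finrank_range_add_finrank_ker A.mulVecLin
  have hD := finrank_range_add_finrank_ker D.mulVecLin
  have hg := finrank_map_add_finrank_inf_ker ((range A.mulVecLin).mkQ ∘ₗ B.mulVecLin)
    (ker D.mulVecLin)
  rw [finrank_ker_fromBlocks_zero₂₁, finrank_fintype_fun_eq_card, Fintype.card_sum] at hF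
  rw [finrank_fintype_fun_eq_card] at hA hD
  change finrank K (range _) = finrank K (range _) + finrank K (range _) + _
  omega

end Blocks

end Matrix

theorem rank_fromBlocks_eq'_general {K : Type*} [Field K] {n1 n2 m1 m2 d1 d2 : ℕ}
    (H12 : Matrix (Fin n1) (Fin m2) K) (H21 : Matrix (Fin n2) (Fin m1) K)
    (H22 : Matrix (Fin n2) (Fin m2) K)
    (U20 : Matrix (Fin n2) (Fin d1) K) (V10 : Matrix (Fin m2) (Fin d2) K)
    (hU20span : Submodule.span K (Set.range (fun j => U20ᵀ j)) =
      LinearMap.ker (Matrix.mulVecLin H21ᵀ))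
    (hV10span : Submodule.span K (Set.range (fun j => V10ᵀ j)) =
      LinearMap.ker (Matrix.mulVecLin H12)) :
    (Matrix.fromBlocks H21 H22 (0 : Matrix (Fin n1) (Fin m1) K) H12).rank =
      (U20ᵀ * H22 * V10).rank + H21.rank + H12.rank := by
  have hM : (U20ᵀ * H22 * V10).rank =
      finrank K (((ker H12.mulVecLin).map H22.mulVecLin).map U20ᵀ.mulVecLin) := by
    rw [← hV10span, Matrix.rank, mulVecLin_mul, mulVecLin_mul, range_comp, map_comp,
      range_mulVecLin]
    rfl
  rw [rank_fromBlocks_zero₂₁, hM, finrank_map_eq_finrank_map_mkQ_ker U20ᵀ.mulVecLin,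
    ker_mulVecLin_transpose_eq_range hU20span, map_comp]
  ring

/-- The rank of the block matrix [[H21, H22],[0, H12]] equals
rank(U20ᵀ · H22 · V10) + rank(H21) + rank(H12), where the columns of U20 form a basis of the
left null space of H21 and the columns of V10 form a basis of the null space of H12. -/
theorem rank_fromBlocks_eq' {K : Type*} [Field K] {n1 n2 m1 m2 d1 d2 : ℕ}
    (H12 : Matrix (Fin n1) (Fin m2) K) (H21 : Matrix (Fin n2) (Fin m1) K)
    (H22 : Matrix (Fin n2) (Fin m2) K)
    (U20 : Matrix (Fin n2) (Fin d1) K) (V10 : Matrix (Fin m2) (Fin d2) K)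
    (hU20li : LinearIndependent K (fun j => U20ᵀ j))
    (hU20span : Submodule.span K (Set.range (fun j => U20ᵀ j)) =
      LinearMap.ker (Matrix.mulVecLin H21ᵀ))
    (hV10li : LinearIndependent K (fun j => V10ᵀ j))
    (hV10span : Submodule.span K (Set.range (fun j => V10ᵀ j)) =
      LinearMap.ker (Matrix.mulVecLin H12)) :
    (Matrix.fromBlocks H21 H22 (0 : Matrix (Fin n1) (Fin m1) K) H12).rank =
      (U20ᵀ * H22 * V10).rank + H21.rank + H12.rank :=
  rank_fromBlocks_eq'_general H12 H21 H22 U20 V10 hU20span hV10span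
end

section
/- Let K be a field, H11 an n1×m1 matrix and H21 an n2×m1 matrix over K such that the (n1+n2)×m1 vertically stacked matrix [H11; H21] has full column rank m1. If V20 is a matrix whose columns form a basis of the kernel of H21, then rank(H11 · V20) = m1 − rank(H21). -/
/-!
The columns of `V20` span `ker H21`, and `H11` is injective on `ker H21` because the stacked
matrix is injective. Hence `rank (H11 * V20) = dim (H11 '' ker H21) = dim ker H21`, which is
`m1 - rank H21` by rank–nullity.
-/

open Matrix

theorem LinearMap.finrank_map_of_disjoint_ker {R M N : Type*} [Ring R] [AddCommGroup M]
    [Module R M] [AddCommGroup N] [Module R N] (f : M →ₗ[R] N) {p : Submodule R M}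
    (hp : Disjoint p (LinearMap.ker f)) : Module.finrank R (p.map f) = Module.finrank R p := by
  rw [← LinearMap.range_domRestrict,
    LinearMap.finrank_range_of_inj (LinearMap.injective_domRestrict_iff.mpr hp)]

namespace Matrix

variable {K : Type*} [Field K] {m p n q : Type*} [Fintype n]

theorem ker_mulVecLin_fromRows (A : Matrix m n K) (B : Matrix p n K) :
    LinearMap.ker (fromRows A B).mulVecLin =
      LinearMap.ker A.mulVecLin ⊓ LinearMap.ker B.mulVecLin := by
  ext v
  simp [fromRows_mulVec, funext_iff, Sum.forall]

theorem rank_add_finrank_ker_mulVecLin (A : Matrix m n K) :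
    A.rank + Module.finrank K (LinearMap.ker A.mulVecLin) = Fintype.card n := by
  rw [rank, LinearMap.finrank_range_add_finrank_ker, Module.finrank_fintype_fun_eq_card]

theorem ker_mulVecLin_eq_bot_of_rank_eq_card {A : Matrix m n K} (hA : A.rank = Fintype.card n) :
    LinearMap.ker A.mulVecLin = ⊥ := by
  have := A.rank_add_finrank_ker_mulVecLin
  exact Submodule.finrank_eq_zero.mp (by omega)

theorem rank_mul_eq_finrank_range_of_disjoint [Fintype q] (A : Matrix m n K) (V : Matrix n q K)
    (h : Disjoint (LinearMap.range V.mulVecLin) (LinearMap.ker A.mulVecLin)) :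
    (A * V).rank = Module.finrank K (LinearMap.range V.mulVecLin) := by
  rw [rank, mulVecLin_mul, LinearMap.range_comp, LinearMap.finrank_map_of_disjoint_ker _ h]

end Matrix

theorem rank_mul_kernelBasis_general {K : Type*} [Field K] {n1 n2 m1 d2 : ℕ}
    (H11 : Matrix (Fin n1) (Fin m1) K) (H21 : Matrix (Fin n2) (Fin m1) K)
    (hfull : (Matrix.fromRows H11 H21).rank = m1)
    (V20 : Matrix (Fin m1) (Fin d2) K)
    (hV20span : Submodule.span K (Set.range (fun j => V20ᵀ j)) =
      LinearMap.ker (Matrix.mulVecLin H21)) :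
    (H11 * V20).rank = m1 - H21.rank := by
  have hrange : LinearMap.range V20.mulVecLin = LinearMap.ker H21.mulVecLin := by
    rw [range_mulVecLin, ← hV20span]
    rfl
  have hdisj : Disjoint (LinearMap.ker H21.mulVecLin) (LinearMap.ker H11.mulVecLin) := by
    rw [disjoint_iff, inf_comm, ← ker_mulVecLin_fromRows,
      ker_mulVecLin_eq_bot_of_rank_eq_card (by rwa [Fintype.card_fin])]
  have hnullity := H21.rank_add_finrank_ker_mulVecLin
  rw [Fintype.card_fin] at hnullity
  rw [rank_mul_eq_finrank_range_of_disjoint _ _ (hrange ▸ hdisj), hrange]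
  omega

/-- If the stacked matrix [H11; H21] has full column rank m1 and the columns of V20 form a basis
of the null space of H21, then rank(H11 · V20) = m1 − rank(H21). -/
theorem rank_mul_kernelBasis {K : Type*} [Field K] {n1 n2 m1 d2 : ℕ}
    (H11 : Matrix (Fin n1) (Fin m1) K) (H21 : Matrix (Fin n2) (Fin m1) K)
    (hfull : (Matrix.fromRows H11 H21).rank = m1)
    (V20 : Matrix (Fin m1) (Fin d2) K)
    (hV20li : LinearIndependent K (fun j => V20ᵀ j))
    (hV20span : Submodule.span K (Set.range (fun j => V20ᵀ j)) =
      LinearMap.ker (Matrix.mulVecLin H21)) :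
    (H11 * V20).rank = m1 - H21.rank :=
  rank_mul_kernelBasis_general H11 H21 hfull V20 hV20span
end

section
/- Let K be a field, and let H11 be an n1×m1 matrix and H12 an n1×m2 matrix over K. If U10 is a matrix whose columns form a basis of the kernel of H12ᵀ (the left null space of H12), then rank(U10ᵀ · H11) = rank([H11 | H12]) − rank(H12). -/
/-!
The rows of `U10ᵀ` span the orthogonal complement of the column space of `H12` for the dot
product, so taking orthogonal complements once more gives `ker U10ᵀ = col(H12)`. Hence
`rank(U10ᵀ H11) = rank H11 - dim(col H11 ⊓ col H12)`, which is
`rank [H11 | H12] - rank H12` by the dimension formula for `col H11 ⊔ col H12 = col [H11 | H12]`.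
-/

open Matrix Submodule LinearMap Module

lemma Submodule.finrank_map_add_finrank_inf_ker_s3 {K V W : Type*} [Field K] [AddCommGroup V]
    [Module K V] [AddCommGroup W] [Module K W] (f : V →ₗ[K] W) (p : Submodule K V)
    [FiniteDimensional K p] :
    finrank K (p.map f) + finrank K (p ⊓ ker f : Submodule K V) = finrank K p := by
  have h := (f.domRestrict p).finrank_range_add_finrank_ker
  rw [range_domRestrict, ker_domRestrict] at h
  rwa [← map_comap_subtype, ← (equivMapOfInjective _ p.injective_subtype _).finrank_eq]

namespace Matrix

variable {K : Type*} [Field K] {l m n : Type*}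

section DotProduct

variable [Fintype n]

variable (K n) in
abbrev dotProductForm : LinearMap.BilinForm K (n → K) := dotProductBilin K K

@[simp] lemma dotProductForm_apply (v w : n → K) : dotProductForm K n v w = v ⬝ᵥ w := rfl

lemma dotProductForm_isRefl : (dotProductForm K n).IsRefl :=
  fun v w h => by rwa [dotProductForm_apply, dotProduct_comm] at h

lemma dotProductForm_nondegenerate : (dotProductForm K n).Nondegenerate := by
  classical
  refine ⟨fun v hv => funext fun i => ?_, fun v hv => funext fun i => ?_⟩
  · simpa using hv (Pi.single i 1)
  · simpa using hv (Pi.single i 1)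

lemma ker_mulVecLin_eq_orthogonal_span_row (M : Matrix m n K) :
    ker M.mulVecLin = (dotProductForm K n).orthogonal (span K (Set.range M.row)) := by
  ext v
  have hspan : (∀ w ∈ span K (Set.range M.row), (dotProductForm K n).flip v w = 0) ↔
      ∀ i, M i ⬝ᵥ v = 0 := by
    simp_rw [← mem_ker (f := (dotProductForm K n).flip v)]
    rw [← SetLike.le_def, span_le, Set.range_subset_iff]
    rfl
  rw [LinearMap.BilinForm.mem_orthogonal_iff, mem_ker, mulVecLin_apply, funext_iff]
  exact hspan.symm

lemma ker_mulVecLin_eq_range_of_span_row_eq_ker {p : Type*} [Fintype p]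
    (U : Matrix m n K) (H : Matrix n p K) (h : span K (Set.range U.row) = ker Hᵀ.mulVecLin) :
    ker U.mulVecLin = range H.mulVecLin := by
  rw [ker_mulVecLin_eq_orthogonal_span_row, h, ker_mulVecLin_eq_orthogonal_span_row,
    LinearMap.BilinForm.orthogonal_orthogonal dotProductForm_nondegenerate dotProductForm_isRefl,
    range_mulVecLin]
  rfl

end DotProduct

variable [Fintype l]

lemma rank_mul_add_finrank_range_inf_ker [Fintype m] (U : Matrix n m K) (A : Matrix m l K) :
    (U * A).rank + finrank K (range A.mulVecLin ⊓ ker U.mulVecLin : Submodule K (m → K)) =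
      A.rank := by
  rw [rank, mulVecLin_mul, range_comp]
  exact (range A.mulVecLin).finrank_map_add_finrank_inf_ker_s3 U.mulVecLin

lemma range_mulVecLin_fromCols [Fintype n] (A : Matrix m l K) (B : Matrix m n K) :
    range (fromCols A B).mulVecLin = range A.mulVecLin ⊔ range B.mulVecLin := by
  rw [range_mulVecLin, range_mulVecLin, range_mulVecLin, ← span_union, ← Set.Sum.elim_range]
  congr 2
  ext (j | j) i <;> rfl

lemma rank_fromCols_add_finrank_range_inf [Fintype n] (A : Matrix m l K) (B : Matrix m n K) :
    (fromCols A B).rank + finrank K (range A.mulVecLin ⊓ range B.mulVecLin : Submodule K (m → K)) =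
      A.rank + B.rank := by
  rw [rank, range_mulVecLin_fromCols]
  exact finrank_sup_add_finrank_inf_eq _ _

end Matrix

theorem rank_leftNullBasis_mul_general {K : Type*} [Field K] {n1 m1 m2 d1 : ℕ}
    (H11 : Matrix (Fin n1) (Fin m1) K) (H12 : Matrix (Fin n1) (Fin m2) K)
    (U10 : Matrix (Fin n1) (Fin d1) K)
    (hU10span : Submodule.span K (Set.range (fun j => U10ᵀ j)) =
      LinearMap.ker (Matrix.mulVecLin H12ᵀ)) :
    (U10ᵀ * H11).rank = (Matrix.fromCols H11 H12).rank - H12.rank := by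
  have hker : ker U10ᵀ.mulVecLin = range H12.mulVecLin :=
    ker_mulVecLin_eq_range_of_span_row_eq_ker U10ᵀ H12 hU10span
  have hmul := rank_mul_add_finrank_range_inf_ker U10ᵀ H11
  have hcols := rank_fromCols_add_finrank_range_inf H11 H12
  rw [hker] at hmul
  omega

/-- If the columns of U10 form a basis of the left null space of H12, then
rank(U10ᵀ · H11) = rank([H11 | H12]) − rank(H12). -/
theorem rank_leftNullBasis_mul {K : Type*} [Field K] {n1 m1 m2 d1 : ℕ}
    (H11 : Matrix (Fin n1) (Fin m1) K) (H12 : Matrix (Fin n1) (Fin m2) K)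
    (U10 : Matrix (Fin n1) (Fin d1) K)
    (hU10li : LinearIndependent K (fun j => U10ᵀ j))
    (hU10span : Submodule.span K (Set.range (fun j => U10ᵀ j)) =
      LinearMap.ker (Matrix.mulVecLin H12ᵀ)) :
    (U10ᵀ * H11).rank = (Matrix.fromCols H11 H12).rank - H12.rank :=
  rank_leftNullBasis_mul_general H11 H12 U10 hU10span
end

section
/- Fix natural numbers p, l, k with k ≥ 1. For every ε > 0 there exists Q such that for every finite field F with |F| ≥ Q and every p×l matrix A over F with k ≤ rank(A), the number of l×k matrices E over F with rank(A·E) = k is at least (1 − ε) · |F|^{l·k}. -/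
open Matrix

section Aux

variable {F : Type} [Field F] [Fintype F]

/-- Vectors with a prescribed value at one coordinate biject with vectors on the
remaining coordinates. -/
def projEquiv {k : ℕ} (j : Fin k) (a : F) :
    {g : Fin k → F // g j = a} ≃ ({i : Fin k // i ≠ j} → F) where
  toFun g i := g.1 i.1
  invFun h := ⟨fun i => if hi : i = j then a else h ⟨i, hi⟩, by simp⟩
  left_inv := by
    rintro ⟨g, hg⟩
    ext i
    by_cases hi : i = j
    · subst hi; simp [hg]
    · simp [hi]
  right_inv h := by
    ext i
    simp [i.2]

lemma card_ne_subtype {k : ℕ} (j : Fin k) :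
    Fintype.card {i : Fin k // i ≠ j} = k - 1 := by
  classical
  have h1 : Fintype.card {i : Fin k // ¬ i = j} = Fintype.card (Fin k) -
      Fintype.card {i : Fin k // i = j} := Fintype.card_subtype_compl _
  simpa [Fintype.card_subtype_eq] using h1

lemma card_projSubtype {k : ℕ} (j : Fin k) (a : F) :
    Nat.card {g : Fin k → F // g j = a} = Fintype.card F ^ (k - 1) := by
  classical
  rw [Nat.card_congr (projEquiv j a), Nat.card_eq_fintype_card, Fintype.card_fun,
    card_ne_subtype]

lemma card_colZero {l k : ℕ} (j : Fin k) :
    Nat.card {M : Matrix (Fin l) (Fin k) F // ∀ r, M r j = 0} =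
      Fintype.card F ^ (l * (k - 1)) := by
  classical
  have e0 : {M : Matrix (Fin l) (Fin k) F // ∀ r, M r j = 0} ≃
      {f : Fin l → (Fin k → F) // ∀ r, f r j = 0} := Equiv.refl _
  have e1 : {f : Fin l → (Fin k → F) // ∀ r, f r j = 0} ≃
      (Fin l → {g : Fin k → F // g j = 0}) :=
      Equiv.subtypePiEquivPi (β := fun _ : Fin l => Fin k → F) (p := fun _ g => g j = 0)
  have e2 : (Fin l → {g : Fin k → F // g j = 0}) ≃
      (Fin l → ({i : Fin k // i ≠ j} → F)) := Equiv.piCongrRight fun _ => projEquiv j 0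
  rw [Nat.card_congr ((e0.trans e1).trans e2), Nat.card_eq_fintype_card, Fintype.card_fun,
    Fintype.card_fun, card_ne_subtype, Fintype.card_fin, ← pow_mul, mul_comm]

/-- If a matrix with `k` columns has rank below `k`, there is a nontrivial kernel vector. -/
lemma exists_ne_zero_of_rank_ne {m k : ℕ} (M : Matrix (Fin m) (Fin k) F)
    (h : M.rank ≠ k) : ∃ c : Fin k → F, c ≠ 0 ∧ M *ᵥ c = 0 := by
  by_contra hc
  push_neg at hc
  have hker : LinearMap.ker M.mulVecLin = ⊥ := by
    rw [LinearMap.ker_eq_bot']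
    intro c hcc
    by_contra h0
    exact (hc c h0) hcc
  have h1 := LinearMap.finrank_range_add_finrank_ker M.mulVecLin
  rw [hker, finrank_bot, Module.finrank_pi, Fintype.card_fin, add_zero] at h1
  exact h (by rw [Matrix.rank]; exact h1)

/-- The key counting bound: the number of "bad" `E` (with `rank (A*E) < k`) is at most
`k * q^(k-1) * q^(l*(k-1)) * card (ker A)`. -/
lemma bad_card_le {p l k : ℕ} (A : Matrix (Fin p) (Fin l) F) :
    Nat.card {E : Matrix (Fin l) (Fin k) F // (A * E).rank ≠ k} ≤
      k * (Fintype.card F ^ (k - 1) * (Fintype.card F ^ (l * (k - 1)) *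
        Nat.card (LinearMap.ker A.mulVecLin))) := by
  classical
  set K := LinearMap.ker A.mulVecLin with hKdef
  set T := Σ j : Fin k, ({g : Fin k → F // g j = 1} ×
    ({M : Matrix (Fin l) (Fin k) F // ∀ r, M r j = 0} × K)) with hTdef
  have hchoice : ∀ E : {E : Matrix (Fin l) (Fin k) F // (A * E).rank ≠ k},
      ∃ x : T, (∀ r i, i ≠ x.1 → E.1 r i = x.2.2.1.1 r i) ∧
        (∀ r, E.1 r x.1 = (x.2.2.2 : Fin l → F) r - (x.2.2.1.1 *ᵥ x.2.1.1) r) := by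
    rintro ⟨E, hE⟩
    obtain ⟨c, hc0, hcv⟩ := exists_ne_zero_of_rank_ne (A * E) hE
    obtain ⟨j, hj⟩ := Function.ne_iff.mp hc0
    have hj' : c j ≠ 0 := by simpa using hj
    set d : Fin k → F := (c j)⁻¹ • c with hd
    have hdj : d j = 1 := by simp [hd, inv_mul_cancel₀ hj']
    have hdv : (A * E) *ᵥ d = 0 := by
      rw [hd, Matrix.mulVec_smul, hcv, smul_zero]
    have hker : E *ᵥ d ∈ K := by
      rw [hKdef, LinearMap.mem_ker, Matrix.mulVecLin_apply, Matrix.mulVec_mulVec]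
      exact hdv
    set M : Matrix (Fin l) (Fin k) F := fun r i => if i = j then 0 else E r i with hM
    refine ⟨⟨j, ⟨d, hdj⟩, ⟨M, fun r => by simp [hM]⟩, ⟨E *ᵥ d, hker⟩⟩, ?_, ?_⟩
    · intro r i hi
      simp [hM, hi]
    · intro r
      have : (E *ᵥ d) r - (M *ᵥ d) r = E r j := by
        simp only [Matrix.mulVec, dotProduct]
        rw [← Finset.sum_sub_distrib]
        rw [Finset.sum_eq_single j]
        · simp [hM, hdj]
        · intro i _ hi
          simp [hM, hi]
        · simp
      simpa using this.symm
  have hΦinj : Function.Injective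
      (fun E : {E : Matrix (Fin l) (Fin k) F // (A * E).rank ≠ k} => (hchoice E).choose) := by
    intro E E' hEE
    have hEE' : (hchoice E).choose = (hchoice E').choose := hEE
    obtain ⟨h1, h2⟩ := (hchoice E).choose_spec
    obtain ⟨h1', h2'⟩ := (hchoice E').choose_spec
    rw [hEE'] at h1 h2
    apply Subtype.ext
    ext r i
    by_cases hi : i = (hchoice E').choose.1
    · rw [hi, h2 r, h2' r]
    · rw [h1 r i hi, ← h1' r i hi]
  have hle : Nat.card {E : Matrix (Fin l) (Fin k) F // (A * E).rank ≠ k} ≤ Nat.card T :=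
    Nat.card_le_card_of_injective _ hΦinj
  refine hle.trans ?_
  have : Nat.card T = ∑ j : Fin k, (Fintype.card F ^ (k - 1) *
      (Fintype.card F ^ (l * (k - 1)) * Nat.card K)) := by
    rw [hTdef, Nat.card_eq_fintype_card, Fintype.card_sigma]
    apply Finset.sum_congr rfl
    intro j _
    rw [← Nat.card_eq_fintype_card, Nat.card_prod, Nat.card_prod,
      card_projSubtype, card_colZero]
  rw [this, Finset.sum_const, Finset.card_univ, Fintype.card_fin, smul_eq_mul]

end Aux

/-- For every ε > 0 there is a field-size threshold Q beyond which, for any matrix A with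
k ≤ rank(A), at least a (1 − ε) fraction of the l×k matrices E satisfy rank(A·E) = k. -/
theorem card_fullColumnRank_ge {p l k : ℕ} (hk : 1 ≤ k) :
    ∀ ε : ℝ, 0 < ε → ∃ Q : ℕ, ∀ (F : Type) [Field F] [Fintype F],
      Q ≤ Fintype.card F →
      ∀ A : Matrix (Fin p) (Fin l) F, k ≤ A.rank →
        (1 - ε) * (Fintype.card F : ℝ) ^ (l * k) ≤
          (Nat.card {E : Matrix (Fin l) (Fin k) F // (A * E).rank = k} : ℝ) := by
  intro ε hε
  refine ⟨⌈(k : ℝ) / ε⌉₊ + k + 1, ?_⟩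
  intro F _ _ hcard A hrank
  classical
  set q := Fintype.card F with hq
  have hq1 : 1 ≤ q := Fintype.card_pos
  have hqk : k + 1 ≤ q := le_trans (by omega) hcard
  have hkl : k ≤ l := le_trans hrank (by simpa using A.rank_le_card_width)
  -- bound the kernel of A
  have hKcard : Nat.card (LinearMap.ker A.mulVecLin) ≤ q ^ (l - k) := by
    have : Fintype (LinearMap.ker A.mulVecLin) := Fintype.ofFinite _
    rw [Nat.card_eq_fintype_card, Module.card_eq_pow_finrank (K := F)]
    apply pow_le_pow_right₀ hq1
    have h1 := LinearMap.finrank_range_add_finrank_ker A.mulVecLin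
    rw [Module.finrank_pi, Fintype.card_fin] at h1
    have h2 : A.rank = Module.finrank F (LinearMap.range A.mulVecLin) := rfl
    omega
  -- bound the bad set
  have hbad : Nat.card {E : Matrix (Fin l) (Fin k) F // (A * E).rank ≠ k} ≤
      k * q ^ (l * k - 1) := by
    refine (bad_card_le A).trans ?_
    have := Nat.mul_le_mul_left (q ^ (k - 1) * q ^ (l * (k - 1))) hKcard
    calc k * (q ^ (k - 1) * (q ^ (l * (k - 1)) * Nat.card (LinearMap.ker A.mulVecLin)))
        ≤ k * (q ^ (k - 1) * (q ^ (l * (k - 1)) * q ^ (l - k))) := by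
          apply Nat.mul_le_mul_left
          apply Nat.mul_le_mul_left
          exact Nat.mul_le_mul_left _ hKcard
      _ = k * q ^ ((k - 1) + (l * (k - 1) + (l - k))) := by rw [pow_add, pow_add]
      _ = k * q ^ (l * k - 1) := by
          have hexp : (k - 1) + (l * (k - 1) + (l - k)) = l * k - 1 := by
            obtain ⟨k', rfl⟩ : ∃ k', k = k' + 1 := ⟨k - 1, by omega⟩
            have ha : l * (k' + 1) = l * k' + l := by ring
            have hb : l * (k' + 1 - 1) = l * k' := by simp
            omega
          rw [hexp]
  -- total count
  have htotal : Nat.card {E : Matrix (Fin l) (Fin k) F // (A * E).rank = k} +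
      Nat.card {E : Matrix (Fin l) (Fin k) F // (A * E).rank ≠ k} = q ^ (l * k) := by
    rw [Nat.card_eq_fintype_card, Nat.card_eq_fintype_card]
    rw [Fintype.card_subtype_compl]
    have hle : Fintype.card {E : Matrix (Fin l) (Fin k) F // (A * E).rank = k} ≤
        Fintype.card (Matrix (Fin l) (Fin k) F) := Fintype.card_subtype_le _
    have hM : Fintype.card (Matrix (Fin l) (Fin k) F) = q ^ (l * k) := by
      have h : Fintype.card (Fin l → Fin k → F) = q ^ (l * k) := by
        rw [Fintype.card_fun, Fintype.card_fun, Fintype.card_fin, Fintype.card_fin,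
          ← pow_mul, mul_comm k l]
      exact h
    omega
  -- conclude over the reals
  have hlk1 : 1 ≤ l * k := Nat.mul_pos (by omega) (by omega)
  have hgood : (q : ℝ) ^ (l * k) - k * q ^ (l * k - 1) ≤
      (Nat.card {E : Matrix (Fin l) (Fin k) F // (A * E).rank = k} : ℝ) := by
    have h2 : k * q ^ (l * k - 1) ≤ q ^ (l * k) := by
      calc k * q ^ (l * k - 1) ≤ q * q ^ (l * k - 1) := Nat.mul_le_mul_right _ (by omega)
        _ = q ^ (l * k - 1 + 1) := by rw [pow_succ, mul_comm]
        _ = q ^ (l * k) := by congr 1; omega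
    have h1 : q ^ (l * k) - k * q ^ (l * k - 1) ≤
        Nat.card {E : Matrix (Fin l) (Fin k) F // (A * E).rank = k} := by omega
    have h3 : ((q ^ (l * k) - k * q ^ (l * k - 1) : ℕ) : ℝ) ≤
        (Nat.card {E : Matrix (Fin l) (Fin k) F // (A * E).rank = k} : ℝ) := by
      exact_mod_cast h1
    rw [Nat.cast_sub h2] at h3
    push_cast at h3
    linarith
  refine le_trans ?_ hgood
  have hqpos : (0 : ℝ) < q := by exact_mod_cast Nat.lt_of_lt_of_le Nat.zero_lt_one hq1
  have hklq : (k : ℝ) ≤ ε * q := by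
    have h1 : ((k : ℝ) / ε) ≤ ⌈(k : ℝ) / ε⌉₊ := Nat.le_ceil _
    have h2 : (⌈(k : ℝ) / ε⌉₊ : ℝ) ≤ q := by exact_mod_cast le_trans (by omega) hcard
    have h3 := le_trans h1 h2
    calc (k : ℝ) = ((k : ℝ) / ε) * ε := by field_simp
      _ ≤ q * ε := mul_le_mul_of_nonneg_right h3 hε.le
      _ = ε * q := by ring
  have hpow : (q : ℝ) ^ (l * k) = q ^ (l * k - 1) * q := by
    rw [← pow_succ]
    congr 1
    omega
  have hpownn : (0 : ℝ) ≤ (q : ℝ) ^ (l * k - 1) := by positivity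
  have h5 : (k : ℝ) * (q : ℝ) ^ (l * k - 1) ≤ ε * (q : ℝ) ^ (l * k) := by
    rw [hpow]
    nlinarith [mul_le_mul_of_nonneg_right hklq hpownn]
  nlinarith [h5, pow_nonneg hqpos.le (l * k)]
end

section
/- Fix natural numbers p, l1, l2, k1, k2. For every ε > 0 there exists Q such that for every finite field F with |F| ≥ Q and all matrices A1 ∈ F^{p×l1}, A2 ∈ F^{p×l2} satisfying k1 ≤ rank(A1), k2 ≤ rank(A2), and k1+k2 ≤ rank([A1 | A2]), the number of pairs (E1, E2) ∈ F^{l1×k1} × F^{l2×k2} with rank([A1·E1 | A2·E2]) = k1+k2 is at least (1 − ε) · |F|^{l1·k1 + l2·k2}. -/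
open Matrix Module

/-!
Write `M(E) = [A₁E₁ | A₂E₂]` and `q = |F|`. If `M(E)` has a nonzero kernel, that kernel has at
least `q` elements, so `q · #{bad E} ≤ #{(E, v) | M(E) v = 0} = ∑ᵥ #{E | M(E) v = 0}`. For fixed
`v = (v₁, v₂)` the map `E ↦ M(E) v = A₁E₁v₁ + A₂E₂v₂` is linear in `E`, and since `E ↦ E v₁` is onto
when `v₁ ≠ 0`, its image contains the column space of `A₁` if `v₁ ≠ 0`, of `A₂` if `v₂ ≠ 0`, and
of `[A₁ | A₂]` if both are nonzero. The rank hypotheses then bound its kernel by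
`|X| · q^(-k₁[v₁ ≠ 0]) · q^(-k₂[v₂ ≠ 0])`, where `X` is the space of pairs `E`, and summing over
`v` gives at most `4|X|`. Hence at most a `4/q` fraction of the pairs is bad.
-/

theorem Nat.card_subtype_add_card_subtype_not {α : Type*} [Finite α] (p : α → Prop) :
    Nat.card {x // p x} + Nat.card {x // ¬p x} = Nat.card α := by
  classical
  rw [← Nat.card_sum, Nat.card_congr (Equiv.sumCompl p)]

section FiniteField

variable {F : Type*} [Field F]
  {M N : Type*} [AddCommGroup M] [Module F M] [AddCommGroup N] [Module F N]

theorem LinearMap.natCard_ker_mul_pow_finrank_range [Fintype F] [Finite M] (f : M →ₗ[F] N) :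
    Nat.card (LinearMap.ker f) * Fintype.card F ^ finrank F (LinearMap.range f) = Nat.card M := by
  have : Module.Finite F M := Module.Finite.of_finite
  rw [Module.natCard_eq_pow_finrank (K := F) (V := LinearMap.ker f),
    Module.natCard_eq_pow_finrank (K := F) (V := M), Nat.card_eq_fintype_card, ← pow_add,
    add_comm, LinearMap.finrank_range_add_finrank_ker]

theorem Submodule.card_le_natCard_of_ne_bot [Fintype F] [Finite M] {S : Submodule F M}
    (hS : S ≠ ⊥) : Fintype.card F ≤ Nat.card S := by
  have : Module.Finite F M := Module.Finite.of_finite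
  rw [Module.natCard_eq_pow_finrank (K := F) (V := S), Nat.card_eq_fintype_card]
  exact Nat.le_self_pow (Submodule.finrank_eq_zero.not.mpr hS) _

variable {X V W : Type*} [AddCommGroup X] [Module F X] [AddCommGroup V] [Module F V]
  [AddCommGroup W] [Module F W]

theorem LinearMap.natCard_ker_ne_bot_mul_card_le_sum_natCard_ker_flip [Fintype F] [Finite X]
    [Fintype V] (B : X →ₗ[F] V →ₗ[F] W) :
    Nat.card {x // LinearMap.ker (B x) ≠ ⊥} * Fintype.card F ≤
      ∑ v : V, Nat.card (LinearMap.ker (B.flip v)) := by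
  classical
  have := Fintype.ofFinite X
  have hswap : ∑ x : X, Nat.card (LinearMap.ker (B x)) =
      ∑ v : V, Nat.card (LinearMap.ker (B.flip v)) := by
    simp only [Nat.card_eq_fintype_card, Fintype.card_subtype, LinearMap.mem_ker,
      LinearMap.flip_apply, Finset.card_filter]
    exact Finset.sum_comm
  rw [← hswap, Nat.card_eq_fintype_card, Fintype.card_subtype, Finset.card_eq_sum_ones,
    Finset.sum_mul, Finset.sum_filter]
  gcongr with x
  split_ifs with h
  · simpa using Submodule.card_le_natCard_of_ne_bot h
  · simp

noncomputable def cardInvUnlessZero [Fintype V] [DecidableEq V] (u : V) : ℝ :=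
  if u = 0 then 1 else (Fintype.card V : ℝ)⁻¹

theorem cardInvUnlessZero_nonneg [Fintype V] [DecidableEq V] (u : V) : 0 ≤ cardInvUnlessZero u := by
  unfold cardInvUnlessZero
  split_ifs <;> positivity

theorem sum_cardInvUnlessZero_le_two [Fintype V] [DecidableEq V] :
    ∑ u : V, cardInvUnlessZero u ≤ 2 := by
  calc ∑ u : V, cardInvUnlessZero u
      ≤ ∑ u : V, ((if u = 0 then 1 else 0) + (Fintype.card V : ℝ)⁻¹) := by
        gcongr with u
        unfold cardInvUnlessZero
        split_ifs <;> simp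
    _ = 2 := by
        rw [Finset.sum_add_distrib, Finset.sum_ite_eq', Finset.sum_const, Finset.card_univ,
          nsmul_eq_mul, mul_inv_cancel₀ (by positivity)]
        norm_num

theorem cardInvUnlessZero_eq_inv_pow [Fintype F] {o : Type*} [Fintype o] [DecidableEq o]
    [DecidableEq F] (u : o → F) :
    cardInvUnlessZero u = ((Fintype.card F : ℝ) ^ (if u = 0 then 0 else Fintype.card o))⁻¹ := by
  unfold cardInvUnlessZero
  split_ifs <;> simp

namespace Matrix

variable {m n n₁ n₂ o o₁ o₂ : Type*} [Fintype n₁] [Fintype n₂]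

theorem rank_eq_card_iff_ker_mulVecLin_eq_bot [Fintype n] (A : Matrix m n F) :
    A.rank = Fintype.card n ↔ LinearMap.ker A.mulVecLin = ⊥ := by
  have := LinearMap.finrank_range_add_finrank_ker A.mulVecLin
  rw [finrank_fintype_fun_eq_card] at this
  rw [← Submodule.finrank_eq_zero, rank]
  omega

def fromColsMulLin (A₁ : Matrix m n₁ F) (A₂ : Matrix m n₂ F) :
    Matrix n₁ o₁ F × Matrix n₂ o₂ F →ₗ[F] Matrix m (o₁ ⊕ o₂) F where
  toFun E := fromCols (A₁ * E.1) (A₂ * E.2)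
  map_add' E E' := by ext i (j | j) <;> simp [Matrix.mul_add]
  map_smul' c E := by ext i (j | j) <;> simp

theorem exists_mulVec_eq [Fintype o] {c : o → F} {x : n → F} (h : c = 0 → x = 0) :
    ∃ E : Matrix n o F, E *ᵥ c = x := by
  classical
  by_cases hc : c = 0
  · exact ⟨0, by simp [h hc]⟩
  obtain ⟨i, hi⟩ := Function.ne_iff.mp hc
  refine ⟨vecMulVec x (Pi.single i (c i)⁻¹), ?_⟩
  simp [vecMulVec_mulVec, single_dotProduct, inv_mul_cancel₀ hi]

variable [Fintype o₁] [Fintype o₂] (A₁ : Matrix m n₁ F) (A₂ : Matrix m n₂ F)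

def fromColsMulBilin :
    Matrix n₁ o₁ F × Matrix n₂ o₂ F →ₗ[F] (o₁ ⊕ o₂ → F) →ₗ[F] m → F :=
  mulVecBilin F F ∘ₗ fromColsMulLin A₁ A₂

theorem fromColsMulBilin_apply (E : Matrix n₁ o₁ F × Matrix n₂ o₂ F) (v : o₁ ⊕ o₂ → F) :
    fromColsMulBilin A₁ A₂ E v =
      A₁ *ᵥ (E.1 *ᵥ (v ∘ Sum.inl)) + A₂ *ᵥ (E.2 *ᵥ (v ∘ Sum.inr)) := by
  simp [fromColsMulBilin, fromColsMulLin, mulVec_mulVec]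

variable {A₁ A₂}

theorem add_mulVec_mem_range_fromColsMulBilin_flip {v : o₁ ⊕ o₂ → F} {u₁ : n₁ → F}
    {u₂ : n₂ → F} (h₁ : v ∘ Sum.inl = 0 → u₁ = 0) (h₂ : v ∘ Sum.inr = 0 → u₂ = 0) :
    A₁ *ᵥ u₁ + A₂ *ᵥ u₂ ∈ LinearMap.range ((fromColsMulBilin A₁ A₂).flip v) := by
  obtain ⟨E₁, rfl⟩ := exists_mulVec_eq h₁
  obtain ⟨E₂, rfl⟩ := exists_mulVec_eq h₂
  exact ⟨(E₁, E₂), fromColsMulBilin_apply A₁ A₂ _ v⟩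

theorem le_finrank_range_fromColsMulBilin_flip [DecidableEq F]
    (h₁ : Fintype.card o₁ ≤ A₁.rank) (h₂ : Fintype.card o₂ ≤ A₂.rank)
    (h₁₂ : Fintype.card o₁ + Fintype.card o₂ ≤ (fromCols A₁ A₂).rank) (v : o₁ ⊕ o₂ → F) :
    (if v ∘ Sum.inl = 0 then 0 else Fintype.card o₁) +
        (if v ∘ Sum.inr = 0 then 0 else Fintype.card o₂) ≤
      finrank F (LinearMap.range ((fromColsMulBilin A₁ A₂).flip v)) := by
  split_ifs with hv₁ hv₂ hv₂
  · exact Nat.zero_le _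
  · refine (zero_add _).trans_le (h₂.trans (Submodule.finrank_mono ?_))
    rintro _ ⟨u, rfl⟩
    simpa using add_mulVec_mem_range_fromColsMulBilin_flip (u₁ := 0) (u₂ := u)
      (fun _ => rfl) (absurd · hv₂)
  · refine (add_zero _).trans_le (h₁.trans (Submodule.finrank_mono ?_))
    rintro _ ⟨u, rfl⟩
    simpa using add_mulVec_mem_range_fromColsMulBilin_flip (u₁ := u) (u₂ := 0)
      (absurd · hv₁) (fun _ => rfl)
  · refine h₁₂.trans (Submodule.finrank_mono ?_)
    rintro _ ⟨w, rfl⟩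
    rw [mulVecLin_apply, fromCols_mulVec]
    exact add_mulVec_mem_range_fromColsMulBilin_flip (absurd · hv₁) (absurd · hv₂)

theorem natCard_ker_fromColsMulBilin_flip_mul_pow_le [Fintype F] [DecidableEq F]
    (h₁ : Fintype.card o₁ ≤ A₁.rank) (h₂ : Fintype.card o₂ ≤ A₂.rank)
    (h₁₂ : Fintype.card o₁ + Fintype.card o₂ ≤ (fromCols A₁ A₂).rank) (v : o₁ ⊕ o₂ → F) :
    Nat.card (LinearMap.ker ((fromColsMulBilin A₁ A₂).flip v)) * Fintype.card F ^
        ((if v ∘ Sum.inl = 0 then 0 else Fintype.card o₁) +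
          (if v ∘ Sum.inr = 0 then 0 else Fintype.card o₂)) ≤
      Nat.card (Matrix n₁ o₁ F × Matrix n₂ o₂ F) := by
  rw [← ((fromColsMulBilin A₁ A₂).flip v).natCard_ker_mul_pow_finrank_range]
  gcongr
  · exact Fintype.card_pos
  · exact le_finrank_range_fromColsMulBilin_flip h₁ h₂ h₁₂ v

theorem sum_natCard_ker_fromColsMulBilin_flip_le [Fintype F] [DecidableEq o₁] [DecidableEq o₂]
    (h₁ : Fintype.card o₁ ≤ A₁.rank) (h₂ : Fintype.card o₂ ≤ A₂.rank)
    (h₁₂ : Fintype.card o₁ + Fintype.card o₂ ≤ (fromCols A₁ A₂).rank) :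
    ∑ v : o₁ ⊕ o₂ → F, (Nat.card (LinearMap.ker ((fromColsMulBilin A₁ A₂).flip v)) : ℝ) ≤
      4 * Nat.card (Matrix n₁ o₁ F × Matrix n₂ o₂ F) := by
  classical
  calc ∑ v : o₁ ⊕ o₂ → F, (Nat.card (LinearMap.ker ((fromColsMulBilin A₁ A₂).flip v)) : ℝ)
      ≤ ∑ v : o₁ ⊕ o₂ → F, Nat.card (Matrix n₁ o₁ F × Matrix n₂ o₂ F) *
          (cardInvUnlessZero (v ∘ Sum.inl) * cardInvUnlessZero (v ∘ Sum.inr)) := by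
        gcongr with v
        rw [cardInvUnlessZero_eq_inv_pow (v ∘ Sum.inl), cardInvUnlessZero_eq_inv_pow (v ∘ Sum.inr),
          ← mul_inv, ← pow_add, ← div_eq_mul_inv, le_div_iff₀ (by positivity)]
        exact_mod_cast natCard_ker_fromColsMulBilin_flip_mul_pow_le h₁ h₂ h₁₂ v
    _ = Nat.card (Matrix n₁ o₁ F × Matrix n₂ o₂ F) *
          ((∑ u : o₁ → F, cardInvUnlessZero u) * (∑ u : o₂ → F, cardInvUnlessZero u)) := by
        rw [Finset.sum_mul_sum, ← Fintype.sum_prod_type', Finset.mul_sum,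
          ← (Equiv.sumArrowEquivProdArrow o₁ o₂ F).sum_comp]
        rfl
    _ ≤ Nat.card (Matrix n₁ o₁ F × Matrix n₂ o₂ F) * (2 * 2) := by
        gcongr
        · exact Finset.sum_nonneg fun u _ => cardInvUnlessZero_nonneg u
        · exact sum_cardInvUnlessZero_le_two
        · exact sum_cardInvUnlessZero_le_two
    _ = 4 * Nat.card (Matrix n₁ o₁ F × Matrix n₂ o₂ F) := by ring

theorem natCard_rank_fromCols_mul_ne_mul_card_le [Fintype F] [DecidableEq o₁] [DecidableEq o₂]
    (h₁ : Fintype.card o₁ ≤ A₁.rank) (h₂ : Fintype.card o₂ ≤ A₂.rank)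
    (h₁₂ : Fintype.card o₁ + Fintype.card o₂ ≤ (fromCols A₁ A₂).rank) :
    (Nat.card {E : Matrix n₁ o₁ F × Matrix n₂ o₂ F //
        (fromCols (A₁ * E.1) (A₂ * E.2)).rank ≠ Fintype.card o₁ + Fintype.card o₂} : ℝ) *
        Fintype.card F ≤ 4 * Nat.card (Matrix n₁ o₁ F × Matrix n₂ o₂ F) := by
  have hrank (E : Matrix n₁ o₁ F × Matrix n₂ o₂ F) :
      (fromCols (A₁ * E.1) (A₂ * E.2)).rank ≠ Fintype.card o₁ + Fintype.card o₂ ↔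
        LinearMap.ker (fromColsMulBilin A₁ A₂ E) ≠ ⊥ := by
    rw [← Fintype.card_sum, ne_eq, rank_eq_card_iff_ker_mulVecLin_eq_bot]
    rfl
  rw [Nat.card_congr (Equiv.subtypeEquivRight hrank)]
  calc _ ≤ ∑ v : o₁ ⊕ o₂ → F,
        (Nat.card (LinearMap.ker ((fromColsMulBilin A₁ A₂).flip v)) : ℝ) := by
        exact_mod_cast (fromColsMulBilin A₁ A₂).natCard_ker_ne_bot_mul_card_le_sum_natCard_ker_flip
    _ ≤ _ := sum_natCard_ker_fromColsMulBilin_flip_le h₁ h₂ h₁₂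

theorem natCard_rank_fromCols_mul_eq_ge [Fintype F] [DecidableEq o₁] [DecidableEq o₂]
    (h₁ : Fintype.card o₁ ≤ A₁.rank) (h₂ : Fintype.card o₂ ≤ A₂.rank)
    (h₁₂ : Fintype.card o₁ + Fintype.card o₂ ≤ (fromCols A₁ A₂).rank) :
    (1 - 4 / (Fintype.card F : ℝ)) * Nat.card (Matrix n₁ o₁ F × Matrix n₂ o₂ F) ≤
      Nat.card {E : Matrix n₁ o₁ F × Matrix n₂ o₂ F //
        (fromCols (A₁ * E.1) (A₂ * E.2)).rank = Fintype.card o₁ + Fintype.card o₂} := by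
  have hbad := natCard_rank_fromCols_mul_ne_mul_card_le h₁ h₂ h₁₂
  have hq : (0 : ℝ) < Fintype.card F := by exact_mod_cast Fintype.card_pos
  rw [← Nat.card_subtype_add_card_subtype_not
    (fun E : Matrix n₁ o₁ F × Matrix n₂ o₂ F =>
      (fromCols (A₁ * E.1) (A₂ * E.2)).rank = Fintype.card o₁ + Fintype.card o₂)] at hbad ⊢
  push_cast at hbad ⊢
  rw [one_sub_div hq.ne', div_mul_eq_mul_div, div_le_iff₀ hq]
  linarith

end Matrix

end FiniteField

/-- For every ε > 0 there is a field-size threshold Q beyond which, for any matrices A1, A2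
satisfying the rank conditions, at least a (1 − ε) fraction of the pairs (E1, E2) satisfy
rank([A1·E1 | A2·E2]) = k1 + k2. -/
theorem card_pair_fullColumnRank_ge (p l1 l2 k1 k2 : ℕ) :
    ∀ ε : ℝ, 0 < ε → ∃ Q : ℕ, ∀ (F : Type) [Field F] [Fintype F],
      Q ≤ Fintype.card F →
      ∀ (A1 : Matrix (Fin p) (Fin l1) F) (A2 : Matrix (Fin p) (Fin l2) F),
        k1 ≤ A1.rank → k2 ≤ A2.rank → k1 + k2 ≤ (Matrix.fromCols A1 A2).rank →
        (1 - ε) * (Fintype.card F : ℝ) ^ (l1 * k1 + l2 * k2) ≤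
          (Nat.card {E : Matrix (Fin l1) (Fin k1) F × Matrix (Fin l2) (Fin k2) F //
            (Matrix.fromCols (A1 * E.1) (A2 * E.2)).rank = k1 + k2} : ℝ) := by
  intro ε hε
  refine ⟨⌈4 / ε⌉₊, fun F _ _ hQ A1 A2 hA1 hA2 hA12 => ?_⟩
  have hq : 4 / (Fintype.card F : ℝ) ≤ ε :=
    div_le_of_le_mul₀ (Nat.cast_nonneg _) hε.le
      ((div_le_iff₀' hε).mp ((Nat.le_ceil _).trans (Nat.cast_le.mpr hQ)))
  have hcard : Nat.card (Matrix (Fin l1) (Fin k1) F × Matrix (Fin l2) (Fin k2) F) =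
      Fintype.card F ^ (l1 * k1 + l2 * k2) := by
    simp [Matrix, pow_add, pow_mul']
  have hgood := Matrix.natCard_rank_fromCols_mul_eq_ge (o₁ := Fin k1) (o₂ := Fin k2)
    (by simpa using hA1) (by simpa using hA2) (by simpa using hA12)
  simp only [Fintype.card_fin, hcard, Nat.cast_pow] at hgood
  exact le_trans (by gcongr) hgood
end

section
/- Fix natural numbers p, l1, l3, k1. For every ε > 0 there exists Q such that for every finite field F with |F| ≥ Q and all matrices A1 ∈ F^{p×l1}, A3 ∈ F^{p×l3} with k1 ≤ rank(A1), the number of matrices E1 ∈ F^{l1×k1} such that dim( colspace(A3) ∩ colspace(A1·E1) ) = max( k1 − rank(A1) + dim( colspace(A1) ∩ colspace(A3) ), 0 ) is at least (1 − ε) · |F|^{l1·k1}. -/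
/-!
Write `U = colspace A1`, `W = colspace A3`, `r = rank A1`, `d = dim (U ∩ W)` and
`m = min k1 (r - d)`. Call the columns `e_j` of `E1` generic if each `v_j = A1 e_j` lies outside
`span (v_i)_{i<j}`, and for `j < m` even outside `W + span (v_i)_{i<j}`. For generic columns the
`v_j` are independent and `dim (W + colspace (A1 E1)) ≥ dim W + m`, while
`W + colspace (A1 E1) ⊆ W + U` has dimension at most `dim W + r - d`; together these pin down
`dim (W ∩ colspace (A1 E1)) = k1 - m = max (k1 - r + d) 0`.

The subspace avoided by `v_j` depends only on the other columns and misses part of `U`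
(its trace on `U` has dimension `< r`), so for fixed other columns at most a `1/|F|` fraction
of the choices of `e_j` is bad. Hence at most a `k1/|F|` fraction of all `E1` is not generic.
-/

open Matrix Submodule Module Set

section PrefixSpan

variable (K : Type*) {V : Type*} [Field K] [AddCommGroup V] [Module K V] {k : ℕ}

def prefixSpan (v : Fin k → V) (n : ℕ) : Submodule K V :=
  span K (v '' {i | (i : ℕ) < n})

variable {K}

@[simp]
theorem prefixSpan_zero (v : Fin k → V) : prefixSpan K v 0 = ⊥ := by
  simp [prefixSpan]

theorem prefixSpan_mono (v : Fin k → V) : Monotone (prefixSpan K v) :=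
  fun _ _ hmn => span_mono (image_mono fun _ hi => lt_of_lt_of_le hi hmn)

theorem apply_mem_prefixSpan_succ (v : Fin k → V) (j : Fin k) :
    v j ∈ prefixSpan K v (j + 1) :=
  subset_span ⟨j, Nat.lt_succ_self j, rfl⟩

theorem prefixSpan_le {U : Submodule K V} {v : Fin k → V} (hvU : ∀ j, v j ∈ U) (n : ℕ) :
    prefixSpan K v n ≤ U :=
  span_le.mpr (image_subset_iff.mpr fun j _ => hvU j)

theorem finrank_prefixSpan_le (v : Fin k → V) (j : Fin k) :
    finrank K (prefixSpan K v j) ≤ j := by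
  have : {i : Fin k | (i : ℕ) < j} = Iio j := rfl
  rw [prefixSpan, this, image_eq_range]
  exact (finrank_range_le_card _).trans (by simp)

theorem prefixSpan_congr {v w : Fin k → V} {n : ℕ} (h : ∀ i : Fin k, (i : ℕ) < n → v i = w i) :
    prefixSpan K v n = prefixSpan K w n :=
  congrArg (span K) (image_congr h)

theorem finrank_add_le_of_lt_succ [FiniteDimensional K V] (S : ℕ → Submodule K V) (n : ℕ)
    (h : ∀ i < n, S i < S (i + 1)) : finrank K (S 0) + n ≤ finrank K (S n) := by
  induction n with
  | zero => simp
  | succ n ih =>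
    have := finrank_lt_finrank_of_lt (h n n.lt_succ_self)
    linarith [ih fun i hi => h i (Nat.lt_succ_of_lt hi)]

theorem finrank_add_le_finrank_sup_prefixSpan [FiniteDimensional K V] (W : Submodule K V)
    {v : Fin k → V} {n : ℕ} (hn : n ≤ k)
    (h : ∀ j : Fin k, (j : ℕ) < n → v j ∉ W ⊔ prefixSpan K v j) :
    finrank K W + n ≤ finrank K ↥(W ⊔ prefixSpan K v n) := by
  have := finrank_add_le_of_lt_succ (fun i => W ⊔ prefixSpan K v i) n fun i hi =>
    lt_of_le_of_ne (sup_le_sup_left (prefixSpan_mono v i.le_succ) W) fun heq =>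
      h ⟨i, hi.trans_le hn⟩ hi (heq ▸ mem_sup_right (apply_mem_prefixSpan_succ v ⟨i, _⟩))
  rwa [prefixSpan_zero, sup_bot_eq] at this

-- The columns are generic when every `v j` lies outside `avoidedSubspace W m v j`.
def avoidedSubspace (W : Submodule K V) (m : ℕ) (v : Fin k → V) (j : Fin k) : Submodule K V :=
  if (j : ℕ) < m then W ⊔ prefixSpan K v j else prefixSpan K v j

theorem avoidedSubspace_of_lt (W : Submodule K V) (v : Fin k → V) {m : ℕ} {j : Fin k}
    (hj : (j : ℕ) < m) : avoidedSubspace W m v j = W ⊔ prefixSpan K v j :=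
  if_pos hj

theorem prefixSpan_le_avoidedSubspace (W : Submodule K V) (m : ℕ) (v : Fin k → V) (j : Fin k) :
    prefixSpan K v j ≤ avoidedSubspace W m v j := by
  unfold avoidedSubspace
  split_ifs
  exacts [le_sup_right, le_rfl]

theorem avoidedSubspace_congr (W : Submodule K V) (m : ℕ) {v w : Fin k → V} {j : Fin k}
    (h : ∀ i < j, v i = w i) : avoidedSubspace W m v j = avoidedSubspace W m w j := by
  simp only [avoidedSubspace, prefixSpan_congr fun i hi => h i hi]

theorem not_le_avoidedSubspace [FiniteDimensional K V] {U W : Submodule K V} {v : Fin k → V}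
    {m : ℕ} (hvU : ∀ j, v j ∈ U) (hk : k ≤ finrank K U)
    (hm : m ≤ finrank K U - finrank K ↥(U ⊓ W)) (j : Fin k) :
    ¬ U ≤ avoidedSubspace W m v j := by
  intro hle
  have hj := finrank_prefixSpan_le (K := K) v j
  unfold avoidedSubspace at hle
  split_ifs at hle with hjm
  · have hU : U = prefixSpan K v j ⊔ U ⊓ W := by
      rw [inf_comm U W, ← sup_inf_assoc_of_le W (prefixSpan_le hvU j),
        sup_comm (prefixSpan K v j) W, inf_eq_right.mpr hle]
    have := finrank_add_le_finrank_add_finrank (prefixSpan K v j) (U ⊓ W)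
    rw [← hU] at this
    omega
  · have := Submodule.finrank_mono hle
    omega

theorem finrank_inf_span_range_eq [FiniteDimensional K V] {U W : Submodule K V} {v : Fin k → V}
    (hvU : ∀ j, v j ∈ U)
    (hv : ∀ j, v j ∉ avoidedSubspace W (min k (finrank K U - finrank K ↥(U ⊓ W))) v j) :
    (finrank K ↥(W ⊓ span K (range v)) : ℤ) =
      max ((k : ℤ) - finrank K U + finrank K ↥(U ⊓ W)) 0 := by
  set m := min k (finrank K U - finrank K ↥(U ⊓ W))
  set X := span K (range v)
  have hvX : ∀ j, v j ∈ X := fun j => subset_span ⟨j, rfl⟩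
  have hX : finrank K X = k := by
    refine le_antisymm ((finrank_range_le_card v).trans (by simp)) ?_
    have := finrank_add_le_finrank_sup_prefixSpan (⊥ : Submodule K V) (v := v) le_rfl fun j _ hj =>
      hv j (prefixSpan_le_avoidedSubspace W m v j (by rwa [bot_sup_eq] at hj))
    rw [finrank_bot, zero_add, bot_sup_eq] at this
    exact this.trans (Submodule.finrank_mono (prefixSpan_le hvX k))
  have hWX : finrank K W + m ≤ finrank K ↥(W ⊔ X) :=
    (finrank_add_le_finrank_sup_prefixSpan W (min_le_left _ _) fun j hj =>
      avoidedSubspace_of_lt W v hj ▸ hv j).trans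
      (Submodule.finrank_mono (sup_le_sup_left (prefixSpan_le hvX m) W))
  have hXU : finrank K ↥(W ⊔ X) ≤ finrank K ↥(W ⊔ U) :=
    Submodule.finrank_mono (sup_le_sup_left (span_le.mpr (range_subset_iff.mpr hvU)) W)
  have hsumX := finrank_sup_add_finrank_inf_eq W X
  have hsumU := finrank_sup_add_finrank_inf_eq W U
  rw [inf_comm] at hsumU
  have hdU := Submodule.finrank_mono (inf_le_left : U ⊓ W ≤ U)
  have hm : m = min k (finrank K U - finrank K ↥(U ⊓ W)) := rfl
  clear_value m X
  omega

end PrefixSpan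

theorem ncard_setOf_apply_mem_mul_le {ι β : Type*} [Fintype ι] [DecidableEq ι] [Fintype β]
    [Nonempty β] (j : ι) (S : (ι → β) → Set β)
    (hS : ∀ g g', (∀ i ≠ j, g i = g' i) → S g = S g') {d : ℕ}
    (hd : ∀ g, (S g).ncard * d ≤ Fintype.card β) :
    {g : ι → β | g j ∈ S g}.ncard * d ≤ Fintype.card (ι → β) := by
  obtain ⟨b₀⟩ := ‹Nonempty β›
  let e := Equiv.funSplitAt j β
  let T : ({i // i ≠ j} → β) → Set β := fun h => S (e.symm (b₀, h))
  have hcover : {g : ι → β | g j ∈ S g} ⊆ ⋃ h, {g | (e g).2 = h ∧ g j ∈ T h} := by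
    intro g hg
    refine mem_iUnion.mpr ⟨(e g).2, rfl, ?_⟩
    change g j ∈ S (e.symm (b₀, (e g).2))
    rwa [hS _ g fun i hi => by simp [e, Equiv.funSplitAt_symm_apply, hi]]
  have hfiber : ∀ h, {g | (e g).2 = h ∧ g j ∈ T h}.ncard ≤ (T h).ncard := fun h =>
    ncard_le_ncard_of_injOn (· j) (fun g hg => hg.2)
      (fun g hg g' hg' hgg' => e.injective (Prod.ext hgg' (hg.1.trans hg'.1.symm))) (toFinite _)
  calc {g : ι → β | g j ∈ S g}.ncard * d
      ≤ (∑ h, {g | (e g).2 = h ∧ g j ∈ T h}.ncard) * d :=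
        Nat.mul_le_mul_right d ((ncard_le_ncard hcover).trans (ncard_iUnion_le_of_fintype _))
    _ ≤ ∑ _h : {i // i ≠ j} → β, Fintype.card β := by
        rw [Finset.sum_mul]
        exact Finset.sum_le_sum fun h _ => (Nat.mul_le_mul_right d (hfiber h)).trans (hd _)
    _ = Fintype.card (ι → β) := by
        rw [Finset.sum_const, Finset.card_univ, smul_eq_mul, Fintype.card_congr e,
          Fintype.card_prod, mul_comm]

theorem Submodule.card_mul_card_le_of_ne_top {K V : Type*} [Field K] [Finite K]
    [AddCommGroup V] [Module K V] [Finite V] {s : Submodule K V} (hs : s ≠ ⊤) :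
    Nat.card s * Nat.card K ≤ Nat.card V := by
  have : Module.Finite K V := Module.Finite.of_finite
  rw [Module.natCard_eq_pow_finrank (K := K), Module.natCard_eq_pow_finrank (K := K) (V := V),
    ← pow_succ]
  exact Nat.pow_le_pow_right Nat.card_pos (Submodule.finrank_lt hs)

section Matrix

variable {F : Type*} [Field F]

theorem range_mulVecLin_mul_transpose {m n o : Type*} [Fintype n] [Fintype o]
    (A : Matrix m n F) (G : Matrix o n F) :
    LinearMap.range (A * Gᵀ).mulVecLin = span F (range fun j => A *ᵥ G j) := by
  rw [range_mulVecLin]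
  rfl

variable [Fintype F] {p l k : ℕ}

theorem ncard_setOf_exists_mem_avoidedSubspace_mul_le (A : Matrix (Fin p) (Fin l) F)
    (W : Submodule F (Fin p → F)) {m : ℕ} (hk : k ≤ A.rank)
    (hm : m ≤ A.rank - finrank F ↥(LinearMap.range A.mulVecLin ⊓ W)) :
    {G : Fin k → Fin l → F | ∃ j, A *ᵥ G j ∈ avoidedSubspace W m (fun i => A *ᵥ G i) j}.ncard *
      Fintype.card F ≤ k * Fintype.card (Fin k → Fin l → F) := by
  have hbad (j : Fin k) :
      {G : Fin k → Fin l → F | A *ᵥ G j ∈ avoidedSubspace W m (fun i => A *ᵥ G i) j}.ncard *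
        Fintype.card F ≤ Fintype.card (Fin k → Fin l → F) := by
    refine ncard_setOf_apply_mem_mul_le j
      (fun G => (comap A.mulVecLin (avoidedSubspace W m (fun i => A *ᵥ G i) j) : Set _))
      (fun G G' h => by rw [avoidedSubspace_congr W m fun i hi => by rw [h i hi.ne]]) fun G => ?_
    rw [← Nat.card_coe_set_eq, ← Nat.card_eq_fintype_card, ← Nat.card_eq_fintype_card]
    refine Submodule.card_mul_card_le_of_ne_top fun htop => not_le_avoidedSubspace
      (fun i => LinearMap.mem_range_self A.mulVecLin (G i)) hk hm j ?_
    exact LinearMap.range_le_iff_comap.mpr htop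
  calc _ ≤ (∑ j : Fin k, {G : Fin k → Fin l → F |
          A *ᵥ G j ∈ avoidedSubspace W m (fun i => A *ᵥ G i) j}.ncard) * Fintype.card F := by
        rw [ofPred_exists]
        exact Nat.mul_le_mul_right _ (ncard_iUnion_le_of_fintype _)
    _ ≤ ∑ _j : Fin k, Fintype.card (Fin k → Fin l → F) := by
        rw [Finset.sum_mul]
        exact Finset.sum_le_sum fun j _ => hbad j
    _ = k * Fintype.card (Fin k → Fin l → F) := by simp

theorem card_finrank_inf_range_eq_ge {l1 l3 k1 : ℕ} (A1 : Matrix (Fin p) (Fin l1) F)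
    (A3 : Matrix (Fin p) (Fin l3) F) (hk : k1 ≤ A1.rank) :
    (1 - k1 / Fintype.card F : ℝ) * Fintype.card F ^ (l1 * k1) ≤
      (Nat.card {E1 : Matrix (Fin l1) (Fin k1) F //
        (finrank F ↥(LinearMap.range A3.mulVecLin ⊓ LinearMap.range (A1 * E1).mulVecLin) : ℤ) =
          max ((k1 : ℤ) - (A1.rank : ℤ) +
            (finrank F ↥(LinearMap.range A1.mulVecLin ⊓ LinearMap.range A3.mulVecLin) : ℤ)) 0} :
        ℝ) := by
  set W := LinearMap.range A3.mulVecLin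
  set bad := {G : Fin k1 → Fin l1 → F | ∃ j, A1 *ᵥ G j ∈
    avoidedSubspace W (min k1 (A1.rank - finrank F ↥(LinearMap.range A1.mulVecLin ⊓ W)))
      (fun i => A1 *ᵥ G i) j}
  have hbad := ncard_setOf_exists_mem_avoidedSubspace_mul_le A1 W hk (min_le_right k1 _)
  have hgood : badᶜ.ncard ≤ Nat.card {E1 : Matrix (Fin l1) (Fin k1) F //
      (finrank F ↥(W ⊓ LinearMap.range (A1 * E1).mulVecLin) : ℤ) =
        max ((k1 : ℤ) - (A1.rank : ℤ) +
          (finrank F ↥(LinearMap.range A1.mulVecLin ⊓ W) : ℤ)) 0} := by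
    rw [← Nat.card_coe_set_eq]
    refine Nat.card_le_card_of_injective (fun G => ⟨(Matrix.of G.1)ᵀ, ?_⟩)
      fun G G' h => Subtype.ext (of.injective (transpose_injective (congrArg Subtype.val h)))
    rw [range_mulVecLin_mul_transpose]
    exact finrank_inf_span_range_eq (fun j => LinearMap.mem_range_self A1.mulVecLin _)
      fun j hj => G.2 ⟨j, hj⟩
  have hsplit := ncard_add_ncard_compl bad
  have hcard : Fintype.card (Fin k1 → Fin l1 → F) = Fintype.card F ^ (l1 * k1) := by
    simp [pow_mul]
  rw [Nat.card_eq_fintype_card, hcard] at hsplit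
  rw [hcard] at hbad
  have hq : (0 : ℝ) < Fintype.card F := by exact_mod_cast Fintype.card_pos
  have hbadR : (bad.ncard : ℝ) ≤ k1 * Fintype.card F ^ (l1 * k1) / Fintype.card F := by
    rw [le_div_iff₀ hq]
    exact_mod_cast hbad
  calc (1 - k1 / Fintype.card F : ℝ) * Fintype.card F ^ (l1 * k1)
      = Fintype.card F ^ (l1 * k1) - k1 * Fintype.card F ^ (l1 * k1) / Fintype.card F := by
        ring
    _ ≤ badᶜ.ncard := by
        have : (bad.ncard + badᶜ.ncard : ℝ) = Fintype.card F ^ (l1 * k1) := by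
          exact_mod_cast hsplit
        linarith
    _ ≤ _ := by exact_mod_cast hgood

end Matrix

/-- For every ε > 0 there is a field-size threshold Q beyond which, for any matrices A1, A3
with k1 ≤ rank(A1), for at least a (1 − ε) fraction of the matrices E1, the dimension of
colspace(A3) ∩ colspace(A1·E1) equals max(k1 − rank(A1) + dim(colspace(A1) ∩ colspace(A3)), 0). -/
theorem card_intersection_dim_ge (p l1 l3 k1 : ℕ) :
    ∀ ε : ℝ, 0 < ε → ∃ Q : ℕ, ∀ (F : Type) [Field F] [Fintype F],
      Q ≤ Fintype.card F →
      ∀ (A1 : Matrix (Fin p) (Fin l1) F) (A3 : Matrix (Fin p) (Fin l3) F),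
        k1 ≤ A1.rank →
        (1 - ε) * (Fintype.card F : ℝ) ^ (l1 * k1) ≤
          (Nat.card {E1 : Matrix (Fin l1) (Fin k1) F //
            (Module.finrank F
              ↥(LinearMap.range A3.mulVecLin ⊓ LinearMap.range (A1 * E1).mulVecLin) : ℤ) =
            max ((k1 : ℤ) - (A1.rank : ℤ) +
              (Module.finrank F
                ↥(LinearMap.range A1.mulVecLin ⊓ LinearMap.range A3.mulVecLin) : ℤ)) 0} : ℝ) := by
  intro ε hε
  refine ⟨⌈k1 / ε⌉₊, fun F _ _ hQ A1 A3 hk => ?_⟩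
  have hq : (0 : ℝ) < Fintype.card F := by exact_mod_cast Fintype.card_pos
  have hkq : (k1 : ℝ) / Fintype.card F ≤ ε := by
    rw [div_le_iff₀ hq]
    have := (div_le_iff₀ hε).mp (Nat.ceil_le.mp hQ)
    linarith
  refine le_trans ?_ (card_finrank_inf_range_eq_ge A1 A3 hk)
  gcongr
end

section
/- Let K be a field and let H11 (n1×m1), H12 (n1×m2), H21 (n2×m1), H22 (n2×m2) be matrices over K satisfying rank([H11 | H12]) = n1, rank([H21 | H22]) = n2, rank([H11; H21]) = m1, and rank([H12; H22]) = m2. Let B = [[H11, H12],[H21, 0]] and C = [[H21, H22],[0, H12]]. If R1, R2 are nonnegative real numbers with R1 ≤ n1 − rank(H12) and R2 ≤ n2 − rank(H21), then all of the following hold: R1 ≤ rank(H11); R2 ≤ rank(H22); R1+R2 ≤ n1+m2−rank(H12); R1+R2 ≤ n2+m1−rank(H21); R1+R2 ≤ rank(B)+rank(C)−rank(H12)−rank(H21); 2R1+R2 ≤ n1+m1+rank(C)−rank(H12)−rank(H21); and R1+2R2 ≤ n2+m2+rank(B)−rank(H12)−rank(H21). -/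
/-!
Since `[H11 | H12]` has full row rank `n1`, subadditivity of rank over column blocks gives
`n1 ≤ rank H11 + rank H12`, and since `[H11 | H12]` is the top block row of `B`, also
`n1 ≤ rank B`; symmetrically `n2 ≤ rank H21 + rank H22` and `n2 ≤ rank C`. Together with
`rank Hii ≤ mi`, each of the seven bounds is a linear combination of these facts and of the
two hypotheses on `R1` and `R2`.
-/

open Matrix

namespace Matrix

variable {m₁ m₂ n₁ n₂ : Type*} [Fintype n₁] [Fintype n₂]

theorem rank_fromCols_le_add {R : Type*} [Field R] (A : Matrix m₁ n₁ R) (B : Matrix m₁ n₂ R) :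
    (fromCols A B).rank ≤ A.rank + B.rank := by
  have hcol : (fromCols A B).col = Sum.elim A.col B.col := by
    ext (j | j) i <;> rfl
  rw [rank_eq_finrank_span_cols, hcol, Set.Sum.elim_range, Submodule.span_union,
    rank_eq_finrank_span_cols, rank_eq_finrank_span_cols]
  have := FiniteDimensional.span_of_finite R (Set.finite_range A.col)
  have := FiniteDimensional.span_of_finite R (Set.finite_range B.col)
  exact Submodule.finrank_add_le_finrank_add_finrank _ _

theorem rank_fromCols_le_rank_fromBlocks {R : Type*} [CommSemiring R] [StrongRankCondition R]
    (A : Matrix m₁ n₁ R) (B : Matrix m₁ n₂ R) (C : Matrix m₂ n₁ R) (D : Matrix m₂ n₂ R) :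
    (fromCols A B).rank ≤ (fromBlocks A B C D).rank :=
  rank_submatrix_le (fromBlocks A B C D) Sum.inl id

end Matrix

theorem region1_subset_capacity_general {K : Type*} [Field K] {n1 n2 m1 m2 : ℕ}
    (H11 : Matrix (Fin n1) (Fin m1) K) (H12 : Matrix (Fin n1) (Fin m2) K)
    (H21 : Matrix (Fin n2) (Fin m1) K) (H22 : Matrix (Fin n2) (Fin m2) K)
    (ha1 : (Matrix.fromCols H11 H12).rank = n1)
    (ha2 : (Matrix.fromCols H21 H22).rank = n2)
    (R1 R2 : ℝ)
    (h1 : R1 ≤ (n1 : ℝ) - (H12.rank : ℝ))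
    (h2 : R2 ≤ (n2 : ℝ) - (H21.rank : ℝ)) :
    R1 ≤ (H11.rank : ℝ) ∧ R2 ≤ (H22.rank : ℝ) ∧
    R1 + R2 ≤ (n1 : ℝ) + (m2 : ℝ) - (H12.rank : ℝ) ∧
    R1 + R2 ≤ (n2 : ℝ) + (m1 : ℝ) - (H21.rank : ℝ) ∧
    R1 + R2 ≤ ((Matrix.fromBlocks H11 H12 H21 (0 : Matrix (Fin n2) (Fin m2) K)).rank : ℝ) +
      ((Matrix.fromBlocks H21 H22 (0 : Matrix (Fin n1) (Fin m1) K) H12).rank : ℝ) -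
      (H12.rank : ℝ) - (H21.rank : ℝ) ∧
    2 * R1 + R2 ≤ (n1 : ℝ) + (m1 : ℝ) +
      ((Matrix.fromBlocks H21 H22 (0 : Matrix (Fin n1) (Fin m1) K) H12).rank : ℝ) -
      (H12.rank : ℝ) - (H21.rank : ℝ) ∧
    R1 + 2 * R2 ≤ (n2 : ℝ) + (m2 : ℝ) +
      ((Matrix.fromBlocks H11 H12 H21 (0 : Matrix (Fin n2) (Fin m2) K)).rank : ℝ) -
      (H12.rank : ℝ) - (H21.rank : ℝ) := by
  have hsub1 : (n1 : ℝ) ≤ H11.rank + H12.rank := by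
    exact_mod_cast ha1.ge.trans (rank_fromCols_le_add H11 H12)
  have hsub2 : (n2 : ℝ) ≤ H21.rank + H22.rank := by
    exact_mod_cast ha2.ge.trans (rank_fromCols_le_add H21 H22)
  have hB : (n1 : ℝ) ≤ (fromBlocks H11 H12 H21 (0 : Matrix (Fin n2) (Fin m2) K)).rank := by
    exact_mod_cast ha1.ge.trans (rank_fromCols_le_rank_fromBlocks H11 H12 H21 0)
  have hC : (n2 : ℝ) ≤ (fromBlocks H21 H22 (0 : Matrix (Fin n1) (Fin m1) K) H12).rank := by
    exact_mod_cast ha2.ge.trans (rank_fromCols_le_rank_fromBlocks H21 H22 0 H12)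
  have hw1 : (H11.rank : ℝ) ≤ m1 := by exact_mod_cast rank_le_width H11
  have hw2 : (H22.rank : ℝ) ≤ m2 := by exact_mod_cast rank_le_width H22
  refine ⟨?_, ?_, ?_, ?_, ?_, ?_, ?_⟩ <;> linarith

/-- Region 1 of Huang et al. lies inside the capacity region of the two-user linear
deterministic interference channel. -/
theorem region1_subset_capacity {K : Type*} [Field K] {n1 n2 m1 m2 : ℕ}
    (H11 : Matrix (Fin n1) (Fin m1) K) (H12 : Matrix (Fin n1) (Fin m2) K)
    (H21 : Matrix (Fin n2) (Fin m1) K) (H22 : Matrix (Fin n2) (Fin m2) K)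
    (ha1 : (Matrix.fromCols H11 H12).rank = n1)
    (ha2 : (Matrix.fromCols H21 H22).rank = n2)
    (ha3 : (Matrix.fromRows H11 H21).rank = m1)
    (ha4 : (Matrix.fromRows H12 H22).rank = m2)
    (R1 R2 : ℝ) (hR1 : 0 ≤ R1) (hR2 : 0 ≤ R2)
    (h1 : R1 ≤ (n1 : ℝ) - (H12.rank : ℝ))
    (h2 : R2 ≤ (n2 : ℝ) - (H21.rank : ℝ)) :
    R1 ≤ (H11.rank : ℝ) ∧ R2 ≤ (H22.rank : ℝ) ∧
    R1 + R2 ≤ (n1 : ℝ) + (m2 : ℝ) - (H12.rank : ℝ) ∧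
    R1 + R2 ≤ (n2 : ℝ) + (m1 : ℝ) - (H21.rank : ℝ) ∧
    R1 + R2 ≤ ((Matrix.fromBlocks H11 H12 H21 (0 : Matrix (Fin n2) (Fin m2) K)).rank : ℝ) +
      ((Matrix.fromBlocks H21 H22 (0 : Matrix (Fin n1) (Fin m1) K) H12).rank : ℝ) -
      (H12.rank : ℝ) - (H21.rank : ℝ) ∧
    2 * R1 + R2 ≤ (n1 : ℝ) + (m1 : ℝ) +
      ((Matrix.fromBlocks H21 H22 (0 : Matrix (Fin n1) (Fin m1) K) H12).rank : ℝ) -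
      (H12.rank : ℝ) - (H21.rank : ℝ) ∧
    R1 + 2 * R2 ≤ (n2 : ℝ) + (m2 : ℝ) +
      ((Matrix.fromBlocks H11 H12 H21 (0 : Matrix (Fin n2) (Fin m2) K)).rank : ℝ) -
      (H12.rank : ℝ) - (H21.rank : ℝ) :=
  region1_subset_capacity_general H11 H12 H21 H22 ha1 ha2 R1 R2 h1 h2
end

section
/- Let K be a field and let H11 (n1×m1), H12 (n1×m2), H21 (n2×m1), H22 (n2×m2) be matrices over K satisfying rank([H11 | H12]) = n1, rank([H21 | H22]) = n2, rank([H11; H21]) = m1, and rank([H12; H22]) = m2. Let B = [[H11, H12],[H21, 0]] and C = [[H21, H22],[0, H12]]. If R1, R2 are nonnegative real numbers with R1 ≤ rank(H11), R2 ≤ min(n1, n2) − rank(H21), and R1 + R2 ≤ n1, then all of the following hold: R1 ≤ rank(H11); R2 ≤ rank(H22); R1+R2 ≤ n1+m2−rank(H12); R1+R2 ≤ n2+m1−rank(H21); R1+R2 ≤ rank(B)+rank(C)−rank(H12)−rank(H21); 2R1+R2 ≤ n1+m1+rank(C)−rank(H12)−rank(H21); and R1+2R2 ≤ n2+m2+rank(B)−rank(H12)−rank(H21).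 -/
/-!
Every inequality is a linear consequence of the constraints on `R1, R2` and four rank facts:
`rank H ≤ width`; `n2 = rank [H21 | H22] ≤ rank H21 + rank H22`; `n1 = rank [H11 | H12] ≤ rank B`,
since `[H11 | H12]` is the top block row of `B`; and `rank H21 + rank H12 ≤ rank C`, since `C` is
block upper triangular. The last one is rank–nullity for the projection of `range C` onto the
bottom coordinates: the image is `range H12` and the kernel contains `range H21`.
-/

open Matrix Module

theorem Submodule.finrank_add_finrank_map_le {K V V₂ : Type*} [DivisionRing K]
    [AddCommGroup V] [Module K V] [AddCommGroup V₂] [Module K V₂] [FiniteDimensional K V]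
    (f : V →ₗ[K] V₂) {U W : Submodule K V} (hUW : U ≤ W) (hU : U ≤ LinearMap.ker f) :
    finrank K U + finrank K (W.map f) ≤ finrank K W := by
  have hker : finrank K U ≤ finrank K (LinearMap.ker (f.domRestrict W)) := by
    rw [LinearMap.ker_domRestrict, ← (Submodule.comapSubtypeEquivOfLe hUW).finrank_eq]
    exact Submodule.finrank_mono (Submodule.comap_mono hU)
  have := (f.domRestrict W).finrank_range_add_finrank_ker
  rw [LinearMap.range_domRestrict] at this
  lia

namespace Matrix

variable {K : Type*} [Field K] {m n m' n' : Type*} [Fintype n] [Fintype n']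

theorem rank_fromCols_le (A : Matrix m n K) (B : Matrix m n' K) :
    (fromCols A B).rank ≤ A.rank + B.rank := by
  refine (Submodule.finrank_mono ?_).trans (Submodule.finrank_add_le_finrank_add_finrank _ _)
  rintro _ ⟨v, rfl⟩
  simpa using Submodule.add_mem_sup (LinearMap.mem_range_self A.mulVecLin _)
    (LinearMap.mem_range_self B.mulVecLin _)

theorem rank_le_rank_fromRows_left (A : Matrix m n K) (B : Matrix m' n K) :
    A.rank ≤ (fromRows A B).rank :=
  rank_submatrix_le (fromRows A B) Sum.inl id

theorem rank_add_rank_le_rank_fromBlocks_zero₂₁ [Fintype m] [Fintype m'] (A : Matrix m n K)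
    (B : Matrix m n' K) (D : Matrix m' n' K) :
    A.rank + D.rank ≤ (fromBlocks A B 0 D).rank := by
  let π : (m ⊕ m' → K) →ₗ[K] (m' → K) := LinearMap.funLeft K K Sum.inr
  refine le_trans (add_le_add (rank_le_rank_fromRows_left A (0 : Matrix m' n K)) ?_)
    (Submodule.finrank_add_finrank_map_le π ?_ ?_)
  · refine Submodule.finrank_mono ?_
    rintro _ ⟨x, rfl⟩
    refine ⟨_, ⟨Sum.elim 0 x, rfl⟩, ?_⟩
    ext i
    simp [π, fromBlocks_mulVec, LinearMap.funLeft]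
  · rintro _ ⟨x, rfl⟩
    refine ⟨Sum.elim x 0, ?_⟩
    ext (i | i) <;> simp [fromBlocks_mulVec]
  · rintro _ ⟨x, rfl⟩
    ext i
    simp [π, LinearMap.funLeft]

end Matrix

theorem region_subset_capacity_16_general {K : Type*} [Field K] {n1 n2 m1 m2 : ℕ}
    (H11 : Matrix (Fin n1) (Fin m1) K) (H12 : Matrix (Fin n1) (Fin m2) K)
    (H21 : Matrix (Fin n2) (Fin m1) K) (H22 : Matrix (Fin n2) (Fin m2) K)
    (ha1 : (Matrix.fromCols H11 H12).rank = n1)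
    (ha2 : (Matrix.fromCols H21 H22).rank = n2)
    (R1 R2 : ℝ)
    (h1 : R1 ≤ (H11.rank : ℝ))
    (h2 : R2 ≤ min (n1 : ℝ) (n2 : ℝ) - (H21.rank : ℝ))
    (h3 : R1 + R2 ≤ (n1 : ℝ)) :
    R1 ≤ (H11.rank : ℝ) ∧ R2 ≤ (H22.rank : ℝ) ∧
    R1 + R2 ≤ (n1 : ℝ) + (m2 : ℝ) - (H12.rank : ℝ) ∧
    R1 + R2 ≤ (n2 : ℝ) + (m1 : ℝ) - (H21.rank : ℝ) ∧
    R1 + R2 ≤ ((Matrix.fromBlocks H11 H12 H21 (0 : Matrix (Fin n2) (Fin m2) K)).rank : ℝ) +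
      ((Matrix.fromBlocks H21 H22 (0 : Matrix (Fin n1) (Fin m1) K) H12).rank : ℝ) -
      (H12.rank : ℝ) - (H21.rank : ℝ) ∧
    2 * R1 + R2 ≤ (n1 : ℝ) + (m1 : ℝ) +
      ((Matrix.fromBlocks H21 H22 (0 : Matrix (Fin n1) (Fin m1) K) H12).rank : ℝ) -
      (H12.rank : ℝ) - (H21.rank : ℝ) ∧
    R1 + 2 * R2 ≤ (n2 : ℝ) + (m2 : ℝ) +
      ((Matrix.fromBlocks H11 H12 H21 (0 : Matrix (Fin n2) (Fin m2) K)).rank : ℝ) -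
      (H12.rank : ℝ) - (H21.rank : ℝ) := by
  have hH11 : (H11.rank : ℝ) ≤ m1 := mod_cast H11.rank_le_width
  have hH12 : (H12.rank : ℝ) ≤ m2 := mod_cast H12.rank_le_width
  have hH22 : (n2 : ℝ) ≤ H21.rank + H22.rank := by
    have := rank_fromCols_le H21 H22
    rw [ha2] at this
    exact_mod_cast this
  have hB : (n1 : ℝ) ≤ (fromBlocks H11 H12 H21 (0 : Matrix (Fin n2) (Fin m2) K)).rank := by
    have := rank_le_rank_fromRows_left (fromCols H11 H12) (fromCols H21 0)
    rw [fromRows_fromCols_eq_fromBlocks, ha1] at this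
    exact_mod_cast this
  have hC : (H21.rank : ℝ) + H12.rank ≤
      (fromBlocks H21 H22 (0 : Matrix (Fin n1) (Fin m1) K) H12).rank :=
    mod_cast rank_add_rank_le_rank_fromBlocks_zero₂₁ H21 H22 H12
  have hmin : min (n1 : ℝ) n2 ≤ n2 := min_le_right _ _
  refine ⟨h1, ?_, ?_, ?_, ?_, ?_, ?_⟩ <;> linarith

/-- Region 2 of Huang et al. lies inside the capacity region of the two-user linear
deterministic interference channel. -/
theorem region_subset_capacity_16 {K : Type*} [Field K] {n1 n2 m1 m2 : ℕ}
    (H11 : Matrix (Fin n1) (Fin m1) K) (H12 : Matrix (Fin n1) (Fin m2) K)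
    (H21 : Matrix (Fin n2) (Fin m1) K) (H22 : Matrix (Fin n2) (Fin m2) K)
    (ha1 : (Matrix.fromCols H11 H12).rank = n1)
    (ha2 : (Matrix.fromCols H21 H22).rank = n2)
    (ha3 : (Matrix.fromRows H11 H21).rank = m1)
    (ha4 : (Matrix.fromRows H12 H22).rank = m2)
    (R1 R2 : ℝ) (hR1 : 0 ≤ R1) (hR2 : 0 ≤ R2)
    (h1 : R1 ≤ (H11.rank : ℝ))
    (h2 : R2 ≤ min (n1 : ℝ) (n2 : ℝ) - (H21.rank : ℝ))
    (h3 : R1 + R2 ≤ (n1 : ℝ)) :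
    R1 ≤ (H11.rank : ℝ) ∧ R2 ≤ (H22.rank : ℝ) ∧
    R1 + R2 ≤ (n1 : ℝ) + (m2 : ℝ) - (H12.rank : ℝ) ∧
    R1 + R2 ≤ (n2 : ℝ) + (m1 : ℝ) - (H21.rank : ℝ) ∧
    R1 + R2 ≤ ((Matrix.fromBlocks H11 H12 H21 (0 : Matrix (Fin n2) (Fin m2) K)).rank : ℝ) +
      ((Matrix.fromBlocks H21 H22 (0 : Matrix (Fin n1) (Fin m1) K) H12).rank : ℝ) -
      (H12.rank : ℝ) - (H21.rank : ℝ) ∧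
    2 * R1 + R2 ≤ (n1 : ℝ) + (m1 : ℝ) +
      ((Matrix.fromBlocks H21 H22 (0 : Matrix (Fin n1) (Fin m1) K) H12).rank : ℝ) -
      (H12.rank : ℝ) - (H21.rank : ℝ) ∧
    R1 + 2 * R2 ≤ (n2 : ℝ) + (m2 : ℝ) +
      ((Matrix.fromBlocks H11 H12 H21 (0 : Matrix (Fin n2) (Fin m2) K)).rank : ℝ) -
      (H12.rank : ℝ) - (H21.rank : ℝ) :=
  region_subset_capacity_16_general H11 H12 H21 H22 ha1 ha2 R1 R2 h1 h2 h3
end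

section
/- Let K be a field and let H11 (n1×m1), H12 (n1×m2), H21 (n2×m1), H22 (n2×m2) be matrices over K satisfying rank([H11 | H12]) = n1, rank([H21 | H22]) = n2, rank([H11; H21]) = m1, and rank([H12; H22]) = m2. Let B = [[H11, H12],[H21, 0]] and C = [[H21, H22],[0, H12]]. If R1, R2 are nonnegative real numbers with R2 ≤ rank(H22) and R1 + 2R2 ≤ rank(H11), then all of the following hold: R1 ≤ rank(H11); R2 ≤ rank(H22); R1+R2 ≤ n1+m2−rank(H12); R1+R2 ≤ n2+m1−rank(H21); R1+R2 ≤ rank(B)+rank(C)−rank(H12)−rank(H21); 2R1+R2 ≤ n1+m1+rank(C)−rank(H12)−rank(H21); and R1+2R2 ≤ n2+m2+rank(B)−rank(H12)−rank(H21). -/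
/-!
Every bound follows from `R₁ + 2R₂ ≤ rank H₁₁` by elementary rank inequalities:
`rank H₁₁` is at most `min n₁ m₁` and at most `rank B` (it is a block of `B`), while the
block-triangular shape of `C` gives `rank H₂₁ + rank H₁₂ ≤ rank C`.
-/

open Matrix Module

theorem Submodule.finrank_add_finrank_map_le_of_le_ker {K V W : Type*} [Field K]
    [AddCommGroup V] [Module K V] [AddCommGroup W] [Module K W]
    (p : V →ₗ[K] W) {S T : Submodule K V} [FiniteDimensional K T]
    (hST : S ≤ T) (hS : S ≤ LinearMap.ker p) :
    finrank K S + finrank K (T.map p) ≤ finrank K T := by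
  have hker : S.comap T.subtype ≤ LinearMap.ker (p.domRestrict T) := by
    rw [LinearMap.ker_domRestrict]
    exact Submodule.comap_mono hS
  calc finrank K S + finrank K (T.map p)
      = finrank K (S.comap T.subtype) + finrank K (LinearMap.range (p.domRestrict T)) := by
        rw [LinearMap.range_domRestrict, (Submodule.comapSubtypeEquivOfLe hST).finrank_eq]
    _ ≤ finrank K (LinearMap.ker (p.domRestrict T)) +
          finrank K (LinearMap.range (p.domRestrict T)) :=
        Nat.add_le_add_right (Submodule.finrank_mono hker) _
    _ = finrank K T := by rw [add_comm, (p.domRestrict T).finrank_range_add_finrank_ker]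

theorem Matrix.rank_add_rank_le_rank_fromBlocks_zero₂₁_s18 {K : Type*} [Field K]
    {m₁ m₂ n₁ n₂ : Type*} [Fintype n₁] [Fintype n₂] [Fintype m₁] [Fintype m₂]
    (A : Matrix m₁ n₁ K) (B : Matrix m₁ n₂ K) (D : Matrix m₂ n₂ K) :
    A.rank + D.rank ≤ (fromBlocks A B 0 D).rank := by
  let f := (fromBlocks A B 0 D).mulVecLin
  let upper : ((m₁ ⊕ m₂) → K) →ₗ[K] m₁ → K := LinearMap.funLeft K K Sum.inl
  let lower : ((m₁ ⊕ m₂) → K) →ₗ[K] m₂ → K := LinearMap.funLeft K K Sum.inr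
  let S := (LinearMap.ker (LinearMap.funLeft K K (Sum.inr : n₂ → n₁ ⊕ n₂))).map f
  have hf_apply (x : n₁ ⊕ n₂ → K) :
      f x = Sum.elim (A *ᵥ (x ∘ Sum.inl) + B *ᵥ (x ∘ Sum.inr))
        (D *ᵥ (x ∘ Sum.inr)) := by
    simp [f, fromBlocks_mulVec]
  have hA : LinearMap.range A.mulVecLin ≤ S.map upper := by
    rintro _ ⟨v, rfl⟩
    refine ⟨f (Sum.elim v 0), ⟨Sum.elim v 0, ?_, rfl⟩, ?_⟩
    · ext i; simp [LinearMap.funLeft]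
    · ext i; simp [hf_apply, upper, LinearMap.funLeft]
  have hS : S ≤ LinearMap.ker lower := by
    rintro _ ⟨x, hx, rfl⟩
    have hx : x ∘ Sum.inr = 0 := hx
    simp [lower, hf_apply, LinearMap.funLeft, hx]
  have hD : (LinearMap.range f).map lower = LinearMap.range D.mulVecLin := by
    have hcomp : lower ∘ₗ f = D.mulVecLin ∘ₗ LinearMap.funLeft K K Sum.inr := by
      ext x i; simp [lower, hf_apply, LinearMap.funLeft]
    rw [← LinearMap.range_comp, hcomp, LinearMap.range_comp,
      LinearMap.range_eq_top.mpr
        (LinearMap.funLeft_surjective_of_injective K K _ Sum.inr_injective), Submodule.map_top]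
  calc A.rank + D.rank ≤ finrank K S + finrank K ((LinearMap.range f).map lower) := by
        gcongr
        · exact (Submodule.finrank_mono hA).trans (Submodule.finrank_map_le _ _)
        · rw [hD]; rfl
    _ ≤ finrank K (LinearMap.range f) :=
        Submodule.finrank_add_finrank_map_le_of_le_ker lower LinearMap.map_le_range hS

theorem region_subset_capacity_18_general {K : Type*} [Field K] {n1 n2 m1 m2 : ℕ}
    (H11 : Matrix (Fin n1) (Fin m1) K) (H12 : Matrix (Fin n1) (Fin m2) K)
    (H21 : Matrix (Fin n2) (Fin m1) K) (H22 : Matrix (Fin n2) (Fin m2) K)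
    (R1 R2 : ℝ) (hR2 : 0 ≤ R2)
    (h1 : R2 ≤ (H22.rank : ℝ))
    (h2 : R1 + 2 * R2 ≤ (H11.rank : ℝ)) :
    R1 ≤ (H11.rank : ℝ) ∧ R2 ≤ (H22.rank : ℝ) ∧
    R1 + R2 ≤ (n1 : ℝ) + (m2 : ℝ) - (H12.rank : ℝ) ∧
    R1 + R2 ≤ (n2 : ℝ) + (m1 : ℝ) - (H21.rank : ℝ) ∧
    R1 + R2 ≤ ((Matrix.fromBlocks H11 H12 H21 (0 : Matrix (Fin n2) (Fin m2) K)).rank : ℝ) +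
      ((Matrix.fromBlocks H21 H22 (0 : Matrix (Fin n1) (Fin m1) K) H12).rank : ℝ) -
      (H12.rank : ℝ) - (H21.rank : ℝ) ∧
    2 * R1 + R2 ≤ (n1 : ℝ) + (m1 : ℝ) +
      ((Matrix.fromBlocks H21 H22 (0 : Matrix (Fin n1) (Fin m1) K) H12).rank : ℝ) -
      (H12.rank : ℝ) - (H21.rank : ℝ) ∧
    R1 + 2 * R2 ≤ (n2 : ℝ) + (m2 : ℝ) +
      ((Matrix.fromBlocks H11 H12 H21 (0 : Matrix (Fin n2) (Fin m2) K)).rank : ℝ) -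
      (H12.rank : ℝ) - (H21.rank : ℝ) := by
  have hB : (H11.rank : ℝ) ≤ (fromBlocks H11 H12 H21 (0 : Matrix (Fin n2) (Fin m2) K)).rank :=
    Nat.cast_le.mpr (rank_submatrix_le (fromBlocks H11 H12 H21 0) Sum.inl Sum.inl)
  have hC : (H21.rank : ℝ) + H12.rank ≤
      (fromBlocks H21 H22 (0 : Matrix (Fin n1) (Fin m1) K) H12).rank := by
    exact_mod_cast rank_add_rank_le_rank_fromBlocks_zero₂₁_s18 H21 H22 H12
  have h11n : (H11.rank : ℝ) ≤ n1 := Nat.cast_le.mpr H11.rank_le_height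
  have h11m : (H11.rank : ℝ) ≤ m1 := Nat.cast_le.mpr H11.rank_le_width
  have h12 : (H12.rank : ℝ) ≤ m2 := Nat.cast_le.mpr H12.rank_le_width
  have h21 : (H21.rank : ℝ) ≤ n2 := Nat.cast_le.mpr H21.rank_le_height
  exact ⟨by linarith, h1, by linarith, by linarith, by linarith, by linarith, by linarith⟩

/-- Region 5 of Erez et al. lies inside the capacity region of the two-user linear
deterministic interference channel. -/
theorem region_subset_capacity_18 {K : Type*} [Field K] {n1 n2 m1 m2 : ℕ}
    (H11 : Matrix (Fin n1) (Fin m1) K) (H12 : Matrix (Fin n1) (Fin m2) K)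
    (H21 : Matrix (Fin n2) (Fin m1) K) (H22 : Matrix (Fin n2) (Fin m2) K)
    (ha1 : (Matrix.fromCols H11 H12).rank = n1)
    (ha2 : (Matrix.fromCols H21 H22).rank = n2)
    (ha3 : (Matrix.fromRows H11 H21).rank = m1)
    (ha4 : (Matrix.fromRows H12 H22).rank = m2)
    (R1 R2 : ℝ) (hR1 : 0 ≤ R1) (hR2 : 0 ≤ R2)
    (h1 : R2 ≤ (H22.rank : ℝ))
    (h2 : R1 + 2 * R2 ≤ (H11.rank : ℝ)) :
    R1 ≤ (H11.rank : ℝ) ∧ R2 ≤ (H22.rank : ℝ) ∧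
    R1 + R2 ≤ (n1 : ℝ) + (m2 : ℝ) - (H12.rank : ℝ) ∧
    R1 + R2 ≤ (n2 : ℝ) + (m1 : ℝ) - (H21.rank : ℝ) ∧
    R1 + R2 ≤ ((Matrix.fromBlocks H11 H12 H21 (0 : Matrix (Fin n2) (Fin m2) K)).rank : ℝ) +
      ((Matrix.fromBlocks H21 H22 (0 : Matrix (Fin n1) (Fin m1) K) H12).rank : ℝ) -
      (H12.rank : ℝ) - (H21.rank : ℝ) ∧
    2 * R1 + R2 ≤ (n1 : ℝ) + (m1 : ℝ) +
      ((Matrix.fromBlocks H21 H22 (0 : Matrix (Fin n1) (Fin m1) K) H12).rank : ℝ) -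
      (H12.rank : ℝ) - (H21.rank : ℝ) ∧
    R1 + 2 * R2 ≤ (n2 : ℝ) + (m2 : ℝ) +
      ((Matrix.fromBlocks H11 H12 H21 (0 : Matrix (Fin n2) (Fin m2) K)).rank : ℝ) -
      (H12.rank : ℝ) - (H21.rank : ℝ) :=
  region_subset_capacity_18_general H11 H12 H21 H22 R1 R2 hR2 h1 h2
end

section
/- Let m1, m2, n1, n2 be nonnegative real numbers with m1 ≥ n2, m2 ≥ n1, and m1 + m2 ≥ n1 + n2, and let R1, R2 be nonnegative real numbers. Then the following seven inequalities: R1 ≤ min(m1,n1); R2 ≤ min(m2,n2); R1+R2 ≤ max(m2,n1); R1+R2 ≤ max(m1,n2); R1+R2 ≤ 2·min(m1+m2, n1+n2) − min(m2,n1) − min(m1,n2); 2R1+R2 ≤ m1+n1+min(m1+m2, n1+n2) − min(m2,n1) − min(m1,n2); and R1+2R2 ≤ m2+n2+min(m1+m2, n1+n2) − min(m2,n1) − min(m1,n2), hold simultaneously if and only if R1 ≤ min(m1,n1), R2 ≤ min(m2,n2), and R1+R2 ≤ min(m1, m2, n1+n2). -/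
/-! In this regime every `min` and `max` of the region resolves: `min m2 n1 = n1`, `min m1 n2 = n2`,
`min (m1 + m2) (n1 + n2) = n1 + n2`, `max m2 n1 = m2`, `max m1 n2 = m1`. The fifth bound then reads
`R1 + R2 ≤ n1 + n2`, and the two weighted bounds become sums of a single-user bound
(`R1 ≤ m1`, resp. `R2 ≤ m2`) and this sum-rate bound, hence are redundant. -/

theorem capacity_region_nondegenerate_general (m1 m2 n1 n2 R1 R2 : ℝ)
    (h1 : n2 ≤ m1) (h2 : n1 ≤ m2) (h3 : n1 + n2 ≤ m1 + m2) :
    (R1 ≤ min m1 n1 ∧ R2 ≤ min m2 n2 ∧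
     R1 + R2 ≤ max m2 n1 ∧ R1 + R2 ≤ max m1 n2 ∧
     R1 + R2 ≤ 2 * min (m1 + m2) (n1 + n2) - min m2 n1 - min m1 n2 ∧
     2 * R1 + R2 ≤ m1 + n1 + min (m1 + m2) (n1 + n2) - min m2 n1 - min m1 n2 ∧
     R1 + 2 * R2 ≤ m2 + n2 + min (m1 + m2) (n1 + n2) - min m2 n1 - min m1 n2) ↔
    (R1 ≤ min m1 n1 ∧ R2 ≤ min m2 n2 ∧ R1 + R2 ≤ min m1 (min m2 (n1 + n2))) := by
  rw [min_eq_right h3, min_eq_right h2, min_eq_right h1, max_eq_left h2, max_eq_left h1]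
  have sum_rate : 2 * (n1 + n2) - n1 - n2 = n1 + n2 := by ring
  rw [sum_rate]
  simp only [le_min_iff]
  constructor
  · rintro ⟨hR1, hR2, hsum_m2, hsum_m1, hsum_n, -, -⟩
    exact ⟨hR1, hR2, hsum_m1, hsum_m2, hsum_n⟩
  · rintro ⟨⟨hR1_m1, hR1_n1⟩, ⟨hR2_m2, hR2_n2⟩, hsum_m1, hsum_m2, hsum_n⟩
    have weighted1 : 2 * R1 + R2 ≤ m1 + n1 + (n1 + n2) - n1 - n2 := by linarith
    have weighted2 : R1 + 2 * R2 ≤ m2 + n2 + (n1 + n2) - n1 - n2 := by linarith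
    exact ⟨⟨hR1_m1, hR1_n1⟩, ⟨hR2_m2, hR2_n2⟩, hsum_m2, hsum_m1, hsum_n, weighted1, weighted2⟩

/-- In the nondegenerate regime m1 ≥ n2, m2 ≥ n1, m1 + m2 ≥ n1 + n2, the seven inequalities
defining the capacity region of the two-user linear deterministic interference channel are
equivalent to R1 ≤ min(m1,n1), R2 ≤ min(m2,n2) and R1 + R2 ≤ min(m1, m2, n1+n2). -/
theorem capacity_region_nondegenerate (m1 m2 n1 n2 R1 R2 : ℝ)
    (hm1 : 0 ≤ m1) (hm2 : 0 ≤ m2) (hn1 : 0 ≤ n1) (hn2 : 0 ≤ n2)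
    (h1 : n2 ≤ m1) (h2 : n1 ≤ m2) (h3 : n1 + n2 ≤ m1 + m2)
    (hR1 : 0 ≤ R1) (hR2 : 0 ≤ R2) :
    (R1 ≤ min m1 n1 ∧ R2 ≤ min m2 n2 ∧
     R1 + R2 ≤ max m2 n1 ∧ R1 + R2 ≤ max m1 n2 ∧
     R1 + R2 ≤ 2 * min (m1 + m2) (n1 + n2) - min m2 n1 - min m1 n2 ∧
     2 * R1 + R2 ≤ m1 + n1 + min (m1 + m2) (n1 + n2) - min m2 n1 - min m1 n2 ∧
     R1 + 2 * R2 ≤ m2 + n2 + min (m1 + m2) (n1 + n2) - min m2 n1 - min m1 n2) ↔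
    (R1 ≤ min m1 n1 ∧ R2 ≤ min m2 n2 ∧ R1 + R2 ≤ min m1 (min m2 (n1 + n2))) :=
  capacity_region_nondegenerate_general m1 m2 n1 n2 R1 R2 h1 h2 h3
end
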